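/- arXiv:1906.11926 — 10 statements merged into one kernel-verified Lean document; each statement's English description precedes it below -/
import Mathlib

section
/- Let M be an integral point set in the plane and let m be a straight line. Then for every positive integer k there are at most 2k−1 distinct (unordered) pairs of points of M lying on m whose distance equals k. -/
/-! Choose a point `r` of `M` off the line and parametrize the line by `t ↦ lineMap a b t`, so
that the segments of length `k` are those between the parameters `t` and `t + h`,
`h = k / dist a b`. The difference `g (t + h) - g t` of the distances `g t` from `r` is an
integer. Since `g` is strictly convex (the line misses `r`), this difference is strictly increasing
in `t`; together with the triangle inequality `|g (t + h) - g t| ≤ k` this makes it injective with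
values in the `2k - 1` integers of `(-k, k)`. -/

/-- An integral point set in the plane: finite, not all collinear, all pairwise
distances integers. -/
def IsIntegralPointSet (M : Finset (EuclideanSpace ℝ (Fin 2))) : Prop :=
  ¬ Collinear ℝ (M : Set (EuclideanSpace ℝ (Fin 2))) ∧
    ∀ p ∈ M, ∀ q ∈ M, ∃ z : ℤ, dist p q = (z : ℝ)

open Set AffineMap

theorem StrictConvexOn.strictMono_sub_comp_add_right {f : ℝ → ℝ} (hf : StrictConvexOn ℝ univ f)
    {h : ℝ} (hh : 0 < h) : StrictMono fun t => f (t + h) - f t := by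
  intro t s hts
  have hslope : (f (t + h) - f t) / h < (f (s + h) - f s) / h := calc
    (f (t + h) - f t) / h = (f (t + h) - f t) / (t + h - t) := by ring_nf
    _ < (f (s + h) - f t) / (s + h - t) :=
      hf.secant_strict_mono trivial trivial trivial (by linarith) (by linarith) (by linarith)
    _ = (f t - f (s + h)) / (t - (s + h)) := by rw [← neg_div_neg_eq]; ring_nf
    _ < (f s - f (s + h)) / (s - (s + h)) :=
      hf.secant_strict_mono trivial trivial trivial (by linarith) (by linarith) hts
    _ = (f (s + h) - f s) / h := by rw [← neg_div_neg_eq]; ring_nf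
  exact (div_lt_div_iff_of_pos_right hh).1 hslope

theorem StrictMono.abs_lt_of_forall_abs_le {F : ℝ → ℝ} (hF : StrictMono F) {c : ℝ}
    (hc : ∀ t, |F t| ≤ c) (t : ℝ) : |F t| < c := by
  have hlo := (abs_le.1 (hc (t - 1))).1
  have hhi := (abs_le.1 (hc (t + 1))).2
  exact abs_lt.2 ⟨hlo.trans_lt (hF (by linarith)), (hF (by linarith)).trans_le hhi⟩

theorem ncard_le_two_mul_sub_one_of_strictMono {g : ℝ → ℝ} {h : ℝ} {k : ℕ} {P : Set ℝ}
    (hmono : StrictMono fun t => g (t + h) - g t) (hbound : ∀ t, |g (t + h) - g t| ≤ k)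
    (hint : ∀ t ∈ P, ∃ z : ℤ, g t = z) :
    {t | t ∈ P ∧ t + h ∈ P}.ncard ≤ 2 * k - 1 := by
  have hlt := hmono.abs_lt_of_forall_abs_le hbound
  calc {t | t ∈ P ∧ t + h ∈ P}.ncard
      ≤ (((↑) : ℤ → ℝ) '' Ioo (-(k : ℤ)) k).ncard := by
        refine ncard_le_ncard_of_injOn _ ?_ hmono.injective.injOn ((finite_Ioo _ _).image _)
        rintro t ⟨htP, hthP⟩
        obtain ⟨z, hz⟩ := hint t htP
        obtain ⟨w, hw⟩ := hint _ hthP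
        obtain ⟨hlo, hhi⟩ := abs_lt.1 (hlt t)
        refine ⟨w - z, ⟨?_, ?_⟩, ?_⟩ <;> simp only [hz, hw] at hlo hhi ⊢ <;> push_cast
        · exact_mod_cast hlo
        · exact_mod_cast hhi
        · rfl
    _ = 2 * k - 1 := by
      rw [ncard_image_of_injective _ Int.cast_injective, ← Finset.coe_Ioo, ncard_coe_finset,
        Int.card_Ioo]
      omega

theorem strictConvexOn_dist_lineMap {E : Type*} [NormedAddCommGroup E] [NormedSpace ℝ E]
    [StrictConvexSpace ℝ E] {a b r : E} (hab : a ≠ b) (hr : r ∉ line[ℝ, a, b]) :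
    StrictConvexOn ℝ univ fun t : ℝ => dist (lineMap a b t) r := by
  set w : ℝ → E := fun t => t • (b - a) + (a - r) with hw
  have hdist : ∀ t, dist (lineMap a b t) r = ‖w t‖ := fun t => by
    rw [dist_eq_norm, lineMap_apply_module']; simp only [hw]; abel_nf
  have hw0 : ∀ t, w t ≠ 0 := fun t h0 => hr <| by
    have hon : lineMap a b t = r := by
      rw [← sub_eq_zero, ← norm_eq_zero, ← dist_eq_norm, hdist, h0, norm_zero]
    exact hon ▸ lineMap_mem_affineSpan_pair t a b
  refine ⟨convex_univ, fun x _ y _ hxy α β hα hβ hαβ => ?_⟩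
  have hcomb : w (α * x + β * y) = α • w x + β • w y := by
    simp only [hw]
    linear_combination (norm := module) -(hαβ • (a - r))
  have hray : ¬ SameRay ℝ (α • w x) (β • w y) := by
    intro hsame
    obtain ⟨μ, ν, hμ, hν, hμν⟩ :=
      hsame.exists_pos (smul_ne_zero hα.ne' (hw0 x)) (smul_ne_zero hβ.ne' (hw0 y))
    have key : (μ * α - ν * β) • (a - r) = (ν * β * y - μ * α * x) • (b - a) := by
      simp only [hw] at hμν
      linear_combination (norm := module) hμν
    -- two positive multiples of points of the line can only agree if `r` lies on it or `x = y`
    by_cases hcoef : μ * α = ν * β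
    · rw [hcoef, sub_self, zero_smul] at key
      rcases smul_eq_zero.1 key.symm with h | h
      · exact hxy (mul_left_cancel₀ (mul_pos hν hβ).ne' (sub_eq_zero.1 h)).symm
      · exact hab (sub_eq_zero.1 h).symm
    · refine hr ?_
      convert lineMap_mem_affineSpan_pair (-((ν * β * y - μ * α * x) / (μ * α - ν * β))) a b
      rw [lineMap_apply_module', div_eq_inv_mul, neg_smul, mul_smul, ← key, smul_smul,
        inv_mul_cancel₀ (sub_ne_zero.2 hcoef), one_smul]
      abel
  simp only [hdist, hcomb, smul_eq_mul]
  calc ‖α • w x + β • w y‖ < ‖α • w x‖ + ‖β • w y‖ := norm_add_lt_of_not_sameRay hray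
    _ = α * ‖w x‖ + β * ‖w y‖ := by
      rw [norm_smul, norm_smul, Real.norm_of_nonneg hα.le, Real.norm_of_nonneg hβ.le]

theorem exists_mem_notMem_affineSpan_pair_of_not_collinear {k V P : Type*} [Field k]
    [AddCommGroup V] [Module k V] [AddTorsor V P] {s : Set P} (hs : ¬ Collinear k s) (a b : P) :
    ∃ r ∈ s, r ∉ line[k, a, b] := by
  by_contra! hline
  refine hs ((collinear_iff_exists_forall_eq_smul_vadd s).2 ⟨a, b -ᵥ a, fun p hp => ?_⟩)
  obtain ⟨t, rfl⟩ := mem_affineSpan_pair_iff_exists_lineMap_eq.1 (hline p hp)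
  exact ⟨t, lineMap_apply a b t⟩

theorem setOf_pair_dist_eq_subset_image_lineMap {E : Type*} [NormedAddCommGroup E]
    [NormedSpace ℝ E] {a b : E} (hab : a ≠ b) (S : Set E) (k : ℝ) :
    {s : Set E | ∃ p q, p ∈ S ∧ q ∈ S ∧ p ∈ line[ℝ, a, b] ∧ q ∈ line[ℝ, a, b] ∧
        dist p q = k ∧ s = {p, q}} ⊆
      (fun t => {lineMap a b t, lineMap a b (t + k / dist a b)}) ''
        {t | lineMap a b t ∈ S ∧ lineMap a b (t + k / dist a b) ∈ S} := by
  rintro s ⟨p, q, hpS, hqS, hp, hq, hpq, rfl⟩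
  obtain ⟨tp, rfl⟩ := mem_affineSpan_pair_iff_exists_lineMap_eq.1 hp
  obtain ⟨tq, rfl⟩ := mem_affineSpan_pair_iff_exists_lineMap_eq.1 hq
  have hparam : |tp - tq| = k / dist a b := by
    rw [eq_div_iff (dist_pos.2 hab).ne', ← Real.dist_eq, ← dist_lineMap_lineMap, hpq]
  rcases le_total tp tq with hle | hle
  · rw [abs_of_nonpos (sub_nonpos.2 hle)] at hparam
    have htq : tq = tp + k / dist a b := by linarith
    exact ⟨tp, ⟨hpS, htq ▸ hqS⟩, by rw [htq]⟩
  · rw [abs_of_nonneg (sub_nonneg.2 hle)] at hparam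
    have htp : tp = tq + k / dist a b := by linarith
    exact ⟨tq, ⟨hqS, htp ▸ hpS⟩, by rw [htp, pair_comm]⟩

/-- Given an integral point set M in the plane and a straight line m, for each
positive integer k there are at most 2k−1 unordered pairs of points of M on m at
distance exactly k. -/
theorem at_most_two_k_sub_one_segments (M : Finset (EuclideanSpace ℝ (Fin 2)))
    (hM : IsIntegralPointSet M)
    (m : AffineSubspace ℝ (EuclideanSpace ℝ (Fin 2)))
    (hm : ∃ a b : EuclideanSpace ℝ (Fin 2), a ≠ b ∧ m = affineSpan ℝ {a, b})
    (k : ℕ) (hk : 1 ≤ k) :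
    Set.ncard {s : Set (EuclideanSpace ℝ (Fin 2)) |
        ∃ p q, p ∈ M ∧ q ∈ M ∧ p ∈ m ∧ q ∈ m ∧ dist p q = (k : ℝ) ∧ s = {p, q}} ≤
      2 * k - 1 := by
  obtain ⟨hcol, hint⟩ := hM
  obtain ⟨a, b, hab, rfl⟩ := hm
  obtain ⟨r, hrM, hr⟩ := exists_mem_notMem_affineSpan_pair_of_not_collinear hcol a b
  set h : ℝ := k / dist a b
  have hh : 0 < h := div_pos (by exact_mod_cast hk) (dist_pos.2 hab)
  set P : Set ℝ := {t | lineMap a b t ∈ M}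
  have hP : {t | t ∈ P ∧ t + h ∈ P}.Finite :=
    (M.finite_toSet.preimage (lineMap_injective ℝ hab).injOn).subset fun _ ht => ht.1
  calc _ ≤ ((fun t => {lineMap a b t, lineMap a b (t + h)}) '' {t | t ∈ P ∧ t + h ∈ P}).ncard :=
        ncard_le_ncard (setOf_pair_dist_eq_subset_image_lineMap hab _ _) (hP.image _)
    _ ≤ {t | t ∈ P ∧ t + h ∈ P}.ncard := ncard_image_le hP
    _ ≤ 2 * k - 1 := by
      refine ncard_le_two_mul_sub_one_of_strictMono
        ((strictConvexOn_dist_lineMap hab hr).strictMono_sub_comp_add_right hh) (fun t => ?_)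
        (fun t ht => hint _ ht r hrM)
      calc _ ≤ dist (lineMap a b (t + h)) (lineMap a b t) := abs_dist_sub_le _ _ _
        _ = k := by
          rw [dist_lineMap_lineMap, Real.dist_eq, add_sub_cancel_left, abs_of_pos hh,
            div_mul_cancel₀ _ (dist_pos.2 hab).ne']
end

section
/- Let M be an integral point set in the plane and let m be a straight line. Then there is at most one pair of points M₁, M₂ ∈ M ∩ m with |M₁M₂| = 1. -/
/-! A point `c` of `M` off the line `m` has integer distances to the ends of a unit segment `pq`
on `m`; by the triangle inequality they differ by at most `1`, and a difference of exactly `1`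
would put `c` on `m`. So `c` is equidistant from `p` and `q`: the segment is centred at the foot of
the perpendicular from `c` to `m`, and two unit segments on `m` with the same centre coincide. -/

open AffineMap

section Collinear

variable {k V P : Type*} [DivisionRing k] [AddCommGroup V] [Module k V] [AddTorsor V P]

theorem collinear_coe_affineSpan_iff {s : Set P} :
    Collinear k (affineSpan k s : Set P) ↔ Collinear k s := by
  change Module.rank k (affineSpan k s).direction ≤ 1 ↔ _
  rw [direction_affineSpan]
  rfl

end Collinear

section StrictConvex

variable {V P : Type*} [NormedAddCommGroup V] [NormedSpace ℝ V] [StrictConvexSpace ℝ V]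
  [MetricSpace P] [NormedAddTorsor V P]

theorem collinear_of_abs_dist_sub_dist_eq {c p q : P} (h : |dist c p - dist c q| = dist p q) :
    Collinear ℝ ({c, p, q} : Set P) := by
  rcases (abs_eq dist_nonneg).mp h with h | h
  · have hw : Wbtw ℝ c q p := dist_add_dist_eq_iff.mp (by rw [dist_comm q p]; linarith)
    simpa only [Set.pair_comm] using hw.collinear
  · exact (dist_add_dist_eq_iff.mp (by linarith) : Wbtw ℝ c p q).collinear

theorem dist_eq_dist_of_dist_eq_one {c p q : P} (hpq : dist p q = 1) (hc : c ∉ line[ℝ, p, q])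
    (hcp : ∃ z : ℤ, dist c p = z) (hcq : ∃ z : ℤ, dist c q = z) : dist c p = dist c q := by
  obtain ⟨z₁, hz₁⟩ := hcp
  obtain ⟨z₂, hz₂⟩ := hcq
  by_contra hne
  have hz : z₁ ≠ z₂ := fun h => hne (by rw [hz₁, hz₂, h])
  have hle : |dist c p - dist c q| ≤ dist p q := by
    simpa only [dist_comm] using abs_dist_sub_le p q c
  have hge : dist p q ≤ |dist c p - dist c q| := by
    rw [hpq, hz₁, hz₂]
    exact_mod_cast Int.one_le_abs (sub_ne_zero.mpr hz)
  have hpq_ne : p ≠ q := fun h => by simp [h] at hpq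
  exact hc <| (collinear_of_abs_dist_sub_dist_eq (le_antisymm hle hge)).mem_affineSpan_of_mem_of_ne
    (by simp) (by simp) (by simp) hpq_ne

end StrictConvex

theorem pair_eq_pair_of_add_eq_add_of_abs_sub_eq {K : Type*} [Field K] [LinearOrder K]
    [IsStrictOrderedRing K] {t u t' u' : K} (hadd : t + u = t' + u') (hsub : |t - u| = |t' - u'|) :
    ({t, u} : Set K) = {t', u'} := by
  rcases abs_eq_abs.mp hsub with h | h
  · obtain ⟨rfl, rfl⟩ : t = t' ∧ u = u' := ⟨by linarith, by linarith⟩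
    rfl
  · obtain ⟨rfl, rfl⟩ : t = u' ∧ u = t' := ⟨by linarith, by linarith⟩
    exact Set.pair_comm _ _

section InnerProduct

open RealInnerProductSpace

variable {V P : Type*} [NormedAddCommGroup V] [InnerProductSpace ℝ V]
  [MetricSpace P] [NormedAddTorsor V P]

theorem dist_lineMap_sq (a b c : P) (t : ℝ) :
    dist c (lineMap a b t) ^ 2 =
      dist c a ^ 2 - 2 * t * ⟪c -ᵥ a, b -ᵥ a⟫ + t ^ 2 * dist a b ^ 2 := by
  rw [dist_eq_norm_vsub V, lineMap_apply, vsub_vadd_eq_vsub_sub, norm_sub_sq_real,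
    inner_smul_right, norm_smul, dist_eq_norm_vsub V, dist_eq_norm_vsub' V, Real.norm_eq_abs]
  ring_nf
  rw [sq_abs]

theorem add_mul_dist_sq_eq_of_dist_lineMap_eq {a b c : P} {t u : ℝ} (htu : t ≠ u)
    (h : dist c (lineMap a b t) = dist c (lineMap a b u)) :
    (t + u) * dist a b ^ 2 = 2 * ⟪c -ᵥ a, b -ᵥ a⟫ := by
  have h2 := congrArg (· ^ 2) h
  simp only [dist_lineMap_sq] at h2
  have : (t - u) * ((t + u) * dist a b ^ 2 - 2 * ⟪c -ᵥ a, b -ᵥ a⟫) = 0 := by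
    linear_combination h2
  linarith [(mul_eq_zero.mp this).resolve_left (sub_ne_zero.mpr htu)]

theorem pair_eq_pair_of_dist_eq_of_mem_affineSpan_pair {a b c p q r s : P}
    (hp : p ∈ line[ℝ, a, b]) (hq : q ∈ line[ℝ, a, b]) (hr : r ∈ line[ℝ, a, b])
    (hs : s ∈ line[ℝ, a, b]) (hpq : p ≠ q) (hcpq : dist c p = dist c q)
    (hcrs : dist c r = dist c s) (hdist : dist p q = dist r s) : ({p, q} : Set P) = {r, s} := by
  obtain ⟨tp, rfl⟩ := mem_affineSpan_pair_iff_exists_lineMap_eq.mp hp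
  obtain ⟨tq, rfl⟩ := mem_affineSpan_pair_iff_exists_lineMap_eq.mp hq
  obtain ⟨tr, rfl⟩ := mem_affineSpan_pair_iff_exists_lineMap_eq.mp hr
  obtain ⟨ts, rfl⟩ := mem_affineSpan_pair_iff_exists_lineMap_eq.mp hs
  simp only [dist_lineMap_lineMap, Real.dist_eq] at hdist
  have htpq : tp ≠ tq := fun h => hpq (by rw [h])
  have hab : dist a b ≠ 0 := fun h => hpq <| by
    rw [dist_eq_zero.mp h, lineMap_same_apply, lineMap_same_apply]
  have htrs : tr ≠ ts := by
    rintro rfl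
    simp [sub_ne_zero.mpr htpq, hab] at hdist
  have hadd : tp + tq = tr + ts := mul_right_cancel₀ (pow_ne_zero 2 hab) <|
    (add_mul_dist_sq_eq_of_dist_lineMap_eq htpq hcpq).trans
      (add_mul_dist_sq_eq_of_dist_lineMap_eq htrs hcrs).symm
  rw [← Set.image_pair, ← Set.image_pair,
    pair_eq_pair_of_add_eq_add_of_abs_sub_eq hadd (mul_right_cancel₀ hab hdist)]

end InnerProduct

/-- Given an integral point set M in the plane and a straight line m, there is at
most one pair of points of M on m at distance 1. -/
theorem at_most_one_unit_pair_on_line (M : Finset (EuclideanSpace ℝ (Fin 2)))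
    (hM : IsIntegralPointSet M)
    (m : AffineSubspace ℝ (EuclideanSpace ℝ (Fin 2)))
    (hm : ∃ a b : EuclideanSpace ℝ (Fin 2), a ≠ b ∧ m = affineSpan ℝ {a, b})
    (p q r s : EuclideanSpace ℝ (Fin 2))
    (hp : p ∈ M) (hq : q ∈ M) (hr : r ∈ M) (hs : s ∈ M)
    (hpm : p ∈ m) (hqm : q ∈ m) (hrm : r ∈ m) (hsm : s ∈ m)
    (hpq : dist p q = 1) (hrs : dist r s = 1) :
    ({p, q} : Set (EuclideanSpace ℝ (Fin 2))) = {r, s} := by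
  obtain ⟨a, b, -, rfl⟩ := hm
  obtain ⟨c, hcM, hc⟩ : ∃ c ∈ M, c ∉ line[ℝ, a, b] := by
    by_contra! h
    exact hM.1 ((collinear_coe_affineSpan_iff.mpr (collinear_pair ℝ a b)).subset h)
  have hc_off {x y} (hx : x ∈ line[ℝ, a, b]) (hy : y ∈ line[ℝ, a, b]) : c ∉ line[ℝ, x, y] :=
    fun hcxy => hc (affineSpan_pair_le_of_mem_of_mem hx hy hcxy)
  refine pair_eq_pair_of_dist_eq_of_mem_affineSpan_pair (c := c)
    hpm hqm hrm hsm (fun h => by simp [h] at hpq) ?_ ?_ (hpq.trans hrs.symm)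
  · exact dist_eq_dist_of_dist_eq_one hpq (hc_off hpm hqm) (hM.2 c hcM p hp) (hM.2 c hcM q hq)
  · exact dist_eq_dist_of_dist_eq_one hrs (hc_off hrm hsm) (hM.2 c hcM r hr) (hM.2 c hcM s hs)
end

section
/- Let Δ be a straight line segment of length l in the plane, let M be an integral point set in the plane, and suppose Δ contains exactly n² + 1 points of M for some positive integer n. Then l ≥ (2/3)n³ + (1/2)n² − (1/6)n. -/
/-!
Sort the `n² + 1` points of `M` on the segment by their distance from `A`: the `n²` consecutive
gaps are positive integers whose sum is at most `l`. Pick `P ∈ M` off the line. Across a gap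
`[x, y]` of length `k`, the triangle inequality (strict, as `P` is off the line) puts the integer
`dist P y - dist P x` in `(-k, k)`; and since the distance from `P` to a point moving along the
line is a strictly convex function of its position, this integer strictly increases from one gap
of length `k` to the next. So at most `2k - 1` gaps have length `k`, at most `j²` have length
`≤ j`, and the gaps sum to at least `∑_{j<n} (n² - j²) = (2/3)n³ + (1/2)n² - (1/6)n`.
-/

open Finset

theorem StrictConvexOn.strictMono_fwdDiff {f : ℝ → ℝ} (hf : StrictConvexOn ℝ Set.univ f) {h : ℝ}
    (hh : 0 < h) : StrictMono (fwdDiff h f) := by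
  intro a c hac
  have h₁ := hf.secant_strict_mono_aux2 (Set.mem_univ a) (Set.mem_univ (c + h))
    (lt_add_of_pos_right a hh) (by linarith : a + h < c + h)
  have h₂ := hf.secant_strict_mono_aux3 (Set.mem_univ a) (Set.mem_univ (c + h)) hac
    (lt_add_of_pos_right c hh)
  simp only [add_sub_cancel_left] at h₁ h₂
  exact (div_lt_div_iff_of_pos_right hh).1 (h₁.trans h₂)

theorem card_filter_gap_eq_le {m : ℕ} {t : Fin (m + 1) → ℝ} (ht : StrictMono t) {f : ℝ → ℝ}
    (hconv : StrictConvexOn ℝ Set.univ f) (hlip : ∀ a b, a ≠ b → |f a - f b| < |a - b|)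
    {z : Fin (m + 1) → ℤ} (hz : ∀ i, f (t i) = z i) (k : ℕ) :
    #{i : Fin m | t i.succ - t i.castSucc = k} ≤ 2 * k - 1 := by
  set G : Finset (Fin m) := {i | t i.succ - t i.castSucc = k}
  set δ : Fin m → ℤ := fun i ↦ z i.succ - z i.castSucc
  have hδ (i : Fin m) : (δ i : ℝ) = f (t i.succ) - f (t i.castSucc) := by push_cast [δ, hz]; rfl
  have hgap (i : Fin m) : t i.castSucc < t i.succ := ht Fin.castSucc_lt_succ
  have hG {i : Fin m} (hi : i ∈ G) : t i.succ = t i.castSucc + k := by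
    rw [← (mem_filter.1 hi).2]; ring
  have hmaps : Set.MapsTo δ G (Ioo (-(k : ℤ)) k) := by
    intro i hi
    have := hlip _ _ (hgap i).ne'
    rw [abs_of_pos (sub_pos.2 (hgap i)), ← hδ, (mem_filter.1 hi).2] at this
    simpa [abs_lt] using (by exact_mod_cast this : |δ i| < k)
  have hmono : StrictMonoOn δ G := by
    intro i hi j hj hij
    have hk : (0 : ℝ) < k := by linarith [hG hi, hgap i]
    have := hconv.strictMono_fwdDiff hk (ht (Fin.castSucc_lt_castSucc_iff.2 hij))
    rw [fwdDiff, fwdDiff, ← hG hi, ← hG hj, ← hδ, ← hδ] at this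
    exact_mod_cast this
  calc #G ≤ #(Ioo (-(k : ℤ)) k) := card_le_card_of_injOn δ hmaps hmono.injOn
    _ = 2 * k - 1 := by rw [Int.card_Ioo]; omega

section Counting

variable {ι : Type*} {s : Finset ι} {D : ι → ℕ}

theorem card_filter_le_le_sq (hD : ∀ k, #{i ∈ s | D i = k} ≤ 2 * k - 1) (j : ℕ) :
    #{i ∈ s | D i ≤ j} ≤ j ^ 2 := by
  induction j with
  -- `2 * 0 - 1 = 0` in `ℕ`: no `D i` vanishes.
  | zero => simpa using hD 0
  | succ j ih =>
    classical
    calc #{i ∈ s | D i ≤ j + 1} = #({i ∈ s | D i ≤ j} ∪ {i ∈ s | D i = j + 1}) := by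
          simp only [← filter_or, Nat.le_add_one_iff]
      _ ≤ j ^ 2 + (2 * (j + 1) - 1) := (card_union_le _ _).trans (add_le_add ih (hD _))
      _ = (j + 1) ^ 2 := by rw [Nat.mul_add_one, Nat.add_sub_assoc (by omega)]; ring

theorem sum_range_card_filter_lt_le_sum (s : Finset ι) (D : ι → ℕ) (n : ℕ) :
    ∑ j ∈ range n, #{i ∈ s | j < D i} ≤ ∑ i ∈ s, D i := by
  simp_rw [card_filter]
  rw [sum_comm]
  gcongr with i
  rw [← card_filter]
  calc #{j ∈ range n | j < D i} ≤ #(range (D i)) :=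
        card_le_card fun j hj ↦ mem_range.2 (mem_filter.1 hj).2
    _ = D i := card_range _

theorem sum_range_sq_sub_sq (n : ℕ) :
    ∑ j ∈ range n, ((n : ℝ) ^ 2 - j ^ 2) =
      (2 / 3 : ℝ) * n ^ 3 + (1 / 2 : ℝ) * n ^ 2 - (1 / 6 : ℝ) * n := by
  have hsq (m : ℕ) : ∑ j ∈ range m, (j : ℝ) ^ 2 = (2 * m ^ 3 - 3 * m ^ 2 + m) / 6 := by
    induction m with
    | zero => simp
    | succ m ih => rw [sum_range_succ, ih]; push_cast; ring
  rw [sum_sub_distrib, sum_const, card_range, hsq, nsmul_eq_mul]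
  ring

theorem le_sum_of_card_filter_eq_le (hD : ∀ k, #{i ∈ s | D i = k} ≤ 2 * k - 1) {n : ℕ}
    (hs : #s = n ^ 2) :
    (2 / 3 : ℝ) * n ^ 3 + (1 / 2 : ℝ) * n ^ 2 - (1 / 6 : ℝ) * n ≤ ∑ i ∈ s, (D i : ℝ) := by
  have hlayer (j : ℕ) : (n : ℝ) ^ 2 - j ^ 2 ≤ #{i ∈ s | j < D i} := by
    have hsplit := card_filter_add_card_filter_not (s := s) (fun i ↦ D i ≤ j)
    simp only [not_le] at hsplit
    have := card_filter_le_le_sq hD j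
    rw [sub_le_iff_le_add]
    exact_mod_cast (by omega : n ^ 2 ≤ #{i ∈ s | j < D i} + j ^ 2)
  calc _ = ∑ j ∈ range n, ((n : ℝ) ^ 2 - j ^ 2) := (sum_range_sq_sub_sq n).symm
    _ ≤ ∑ j ∈ range n, (#{i ∈ s | j < D i} : ℝ) := sum_le_sum fun j _ ↦ hlayer j
    _ ≤ ∑ i ∈ s, (D i : ℝ) := by exact_mod_cast sum_range_card_filter_lt_le_sum s D n

end Counting

theorem Fin.sum_succ_sub_castSucc {G : Type*} [AddCommGroup G] {m : ℕ} (f : Fin (m + 1) → G) :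
    ∑ i : Fin m, (f i.succ - f i.castSucc) = f (Fin.last m) - f 0 := by
  induction m with
  | zero => simp
  | succ m ih =>
    rw [Fin.sum_univ_castSucc]
    have := ih (fun i ↦ f i.castSucc)
    simp only [Fin.succ_castSucc, Fin.castSucc_zero] at this ⊢
    rw [this, Fin.succ_last]
    abel

theorem le_sub_of_integral_gaps {n : ℕ} {t : Fin (n ^ 2 + 1) → ℝ} (ht : StrictMono t) {f : ℝ → ℝ}
    (hconv : StrictConvexOn ℝ Set.univ f) (hlip : ∀ a b, a ≠ b → |f a - f b| < |a - b|)
    (hint : ∀ i, ∃ z : ℤ, f (t i) = z)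
    (hgap : ∀ i : Fin (n ^ 2), ∃ d : ℕ, t i.succ - t i.castSucc = d) :
    (2 / 3 : ℝ) * n ^ 3 + (1 / 2 : ℝ) * n ^ 2 - (1 / 6 : ℝ) * n ≤ t (Fin.last _) - t 0 := by
  choose z hz using hint
  choose D hD using hgap
  have hcount (k : ℕ) : #{i ∈ univ | D i = k} ≤ 2 * k - 1 := by
    simpa only [hD, Nat.cast_inj] using card_filter_gap_eq_le ht hconv hlip hz k
  calc _ ≤ ∑ i, (D i : ℝ) := le_sum_of_card_filter_eq_le hcount (by simp)
    _ = t (Fin.last _) - t 0 := by simp only [← hD, Fin.sum_succ_sub_castSucc]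

theorem Finset.exists_fin_strictMono_of_injOn {α β : Type*} [LinearOrder β] (T : Finset α)
    {g : α → β} (hg : Set.InjOn g T) {N : ℕ} (hT : #T = N) :
    ∃ p : Fin N → α, (∀ i, p i ∈ T) ∧ StrictMono fun i ↦ g (p i) := by
  classical
  have hcard : #(T.image g) = N := by rw [card_image_of_injOn hg, hT]
  have hmem (i : Fin N) : ∃ a ∈ T, g a = (T.image g).orderEmbOfFin hcard i :=
    mem_image.1 ((T.image g).orderEmbOfFin_mem hcard i)
  choose p hpT hp using hmem
  exact ⟨p, hpT, fun i j hij ↦ by simpa [hp] using hij⟩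

section NormedSpace

variable {E : Type*} [NormedAddCommGroup E] [NormedSpace ℝ E] {w u : E}

theorem eq_add_dist_smul_of_mem_segment {A B p : E} (hp : p ∈ segment ℝ A B) :
    p = A + dist A p • (dist A B)⁻¹ • (B - A) := by
  rcases eq_or_ne A B with rfl | hAB
  · simp_all
  obtain ⟨θ, ⟨hθ, -⟩, rfl⟩ := segment_eq_image_lineMap ℝ A B ▸ hp
  rw [dist_left_lineMap, Real.norm_of_nonneg hθ, smul_smul,
    mul_inv_cancel_right₀ (dist_ne_zero.2 hAB), AffineMap.lineMap_apply_module', add_comm]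

theorem not_sameRay_sub_smul_sub_smul (hwu : LinearIndependent ℝ ![u, w]) {s t : ℝ}
    (hst : s ≠ t) : ¬ SameRay ℝ (w - s • u) (w - t • u) := by
  intro h
  have hne (r : ℝ) : w - r • u ≠ 0 := fun h0 ↦ by
    simpa using LinearIndependent.pair_iff.1 hwu (-r) 1 (by rw [← h0]; module)
  obtain ⟨a, b, ha, -, hab⟩ := h.exists_pos (hne s) (hne t)
  obtain ⟨hst', hab'⟩ := LinearIndependent.pair_iff.1 hwu (b * t - a * s) (a - b)
    (by linear_combination (norm := module) hab)
  obtain rfl : a = b := sub_eq_zero.1 hab'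
  exact hst (mul_left_cancel₀ ha.ne' (by linarith))

theorem exists_linearIndependent_sub_of_not_collinear {s : Set E} (hs : ¬ Collinear ℝ s) (A : E)
    (hu : u ≠ 0) : ∃ P ∈ s, LinearIndependent ℝ ![u, P - A] := by
  by_contra! h
  refine hs (collinear_iff_exists_forall_eq_smul_vadd s |>.2 ⟨A, u, fun P hP ↦ ?_⟩)
  obtain ⟨r, hr⟩ := not_forall_not.1 (mt (LinearIndependent.pair_iff' hu).2 (h P hP))
  exact ⟨r, by rw [vadd_eq_add, hr, sub_add_cancel]⟩

variable [StrictConvexSpace ℝ E]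

theorem strictConvexOn_norm_sub_smul (hwu : LinearIndependent ℝ ![u, w]) :
    StrictConvexOn ℝ Set.univ fun s : ℝ ↦ ‖w - s • u‖ := by
  refine ⟨convex_univ, fun s _ t _ hst a b ha hb hab ↦ ?_⟩
  have hsplit : w - (a • s + b • t) • u = a • (w - s • u) + b • (w - t • u) := by
    linear_combination (norm := module) -(hab • w)
  have hray : ¬ SameRay ℝ (a • (w - s • u)) (b • (w - t • u)) := fun h ↦
    not_sameRay_sub_smul_sub_smul hwu hst <| by
      simpa [inv_smul_smul₀ ha.ne', inv_smul_smul₀ hb.ne'] using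
        (h.pos_smul_left (inv_pos.2 ha)).pos_smul_right (inv_pos.2 hb)
  calc ‖w - (a • s + b • t) • u‖ < ‖a • (w - s • u)‖ + ‖b • (w - t • u)‖ := by
        rw [hsplit]; exact norm_add_lt_of_not_sameRay hray
    _ = a • ‖w - s • u‖ + b • ‖w - t • u‖ := by
        rw [norm_smul_of_nonneg ha.le, norm_smul_of_nonneg hb.le, smul_eq_mul, smul_eq_mul]

theorem abs_norm_sub_smul_sub_norm_sub_smul_lt (hwu : LinearIndependent ℝ ![u, w]) {s t : ℝ}
    (hst : s ≠ t) : |‖w - s • u‖ - ‖w - t • u‖| < |s - t| * ‖u‖ := by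
  have h := abs_lt_norm_sub_of_not_sameRay (not_sameRay_sub_smul_sub_smul hwu hst)
  rwa [sub_sub_sub_cancel_left, ← sub_smul, norm_smul, Real.norm_eq_abs, abs_sub_comm t] at h

theorem le_sub_of_integral_distances_on_line {A P : E} (hu : ‖u‖ = 1)
    (hP : LinearIndependent ℝ ![u, P - A]) {n : ℕ} {t : Fin (n ^ 2 + 1) → ℝ} (ht : StrictMono t)
    (hPt : ∀ i, ∃ z : ℤ, dist P (A + t i • u) = z)
    (htt : ∀ i j, ∃ d : ℕ, dist (A + t i • u) (A + t j • u) = d) :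
    (2 / 3 : ℝ) * n ^ 3 + (1 / 2 : ℝ) * n ^ 2 - (1 / 6 : ℝ) * n ≤ t (Fin.last _) - t 0 := by
  have hdist (s s' : ℝ) : dist (A + s • u) (A + s' • u) = |s - s'| := by
    rw [dist_add_left, dist_eq_norm, ← sub_smul, norm_smul, hu, mul_one, Real.norm_eq_abs]
  refine le_sub_of_integral_gaps ht (strictConvexOn_norm_sub_smul hP)
    (fun a b hab ↦ by simpa [hu] using abs_norm_sub_smul_sub_norm_sub_smul_lt hP hab)
    (fun i ↦ by simpa only [dist_eq_norm, sub_sub] using hPt i) (fun i ↦ ?_)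
  obtain ⟨d, hd⟩ := htt i.succ i.castSucc
  rw [hdist, abs_of_pos (sub_pos.2 (ht Fin.castSucc_lt_succ))] at hd
  exact ⟨d, hd⟩

end NormedSpace

theorem IsIntegralPointSet.exists_dist_eq_natCast {M : Finset (EuclideanSpace ℝ (Fin 2))}
    (hM : IsIntegralPointSet M) {p q : EuclideanSpace ℝ (Fin 2)} (hp : p ∈ M) (hq : q ∈ M) :
    ∃ d : ℕ, dist p q = d := by
  obtain ⟨z, hz⟩ := hM.2 p hp q hq
  lift z to ℕ using by exact_mod_cast hz ▸ dist_nonneg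
  exact ⟨z, hz⟩

theorem segment_length_n_sq_plus_one_points_general (M : Finset (EuclideanSpace ℝ (Fin 2)))
    (hM : IsIntegralPointSet M) (A B : EuclideanSpace ℝ (Fin 2)) (l : ℝ)
    (hl : dist A B = l) (n : ℕ)
    (hcard : (segment ℝ A B ∩ (M : Set (EuclideanSpace ℝ (Fin 2)))).ncard = n ^ 2 + 1) :
    (2 / 3 : ℝ) * n ^ 3 + (1 / 2 : ℝ) * n ^ 2 - (1 / 6 : ℝ) * n ≤ l := by
  classical
  rcases n.eq_zero_or_pos with rfl | hn
  · norm_num; exact hl ▸ dist_nonneg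
  have hAB : A ≠ B := by
    rintro rfl
    have := hcard ▸ Set.ncard_inter_le_ncard_left (segment ℝ A A) M (by simp)
    simp_all
  set T : Finset (EuclideanSpace ℝ (Fin 2)) := {p ∈ M | p ∈ segment ℝ A B}
  have hT : #T = n ^ 2 + 1 := by
    rw [← hcard, ← Set.ncard_coe_finset]; congr 1; ext; simp [T, and_comm]
  set u := (dist A B)⁻¹ • (B - A)
  have hu : ‖u‖ = 1 := by
    rw [norm_smul, norm_inv, Real.norm_of_nonneg dist_nonneg, ← dist_eq_norm',
      inv_mul_cancel₀ (dist_ne_zero.2 hAB)]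
  have hline {p} (hp : p ∈ T) : A + dist A p • u = p :=
    (eq_add_dist_smul_of_mem_segment (mem_filter.1 hp).2).symm
  obtain ⟨p, hpT, hmono⟩ := T.exists_fin_strictMono_of_injOn (g := dist A)
    (fun p hp q hq h ↦ by rw [← hline hp, ← hline hq, h]) hT
  obtain ⟨P, hPM, hPu⟩ :=
    exists_linearIndependent_sub_of_not_collinear hM.1 A (norm_ne_zero_iff.1 (hu ▸ one_ne_zero))
  have key := le_sub_of_integral_distances_on_line hu hPu hmono
    (fun i ↦ by rw [hline (hpT i)]; exact hM.2 P hPM _ (mem_filter.1 (hpT i)).1)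
    (fun i j ↦ by
      rw [hline (hpT i), hline (hpT j)]
      exact hM.exists_dist_eq_natCast (mem_filter.1 (hpT i)).1 (mem_filter.1 (hpT j)).1)
  have hlast := dist_add_dist_of_mem_segment (mem_filter.1 (hpT (Fin.last _))).2
  linarith [dist_nonneg (x := A) (y := p 0), dist_nonneg (x := p (Fin.last _)) (y := B)]

/-- If a straight line segment of length l contains exactly n² + 1 points of an
integral point set M in the plane, then l ≥ (2/3)n³ + (1/2)n² − (1/6)n. -/
theorem segment_length_n_sq_plus_one_points (M : Finset (EuclideanSpace ℝ (Fin 2)))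
    (hM : IsIntegralPointSet M) (A B : EuclideanSpace ℝ (Fin 2)) (l : ℝ)
    (hl : dist A B = l) (n : ℕ) (hn : 1 ≤ n)
    (hcard : (segment ℝ A B ∩ (M : Set (EuclideanSpace ℝ (Fin 2)))).ncard = n ^ 2 + 1) :
    (2 / 3 : ℝ) * n ^ 3 + (1 / 2 : ℝ) * n ^ 2 - (1 / 6 : ℝ) * n ≤ l :=
  segment_length_n_sq_plus_one_points_general M hM A B l hl n hcard
end

section
/- Let Δ be a straight line segment of length b in the plane, let M be an integral point set in the plane, and suppose Δ contains exactly t points of M. Then b ≥ (2/3)t^{3/2} − (3/2)t + (5/6)t^{1/2}. -/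
/-!
Order the points of `M` on the segment as `x₀ < ⋯ < xₙ` along the line (`n = t - 1`) and
pick `P ∈ M` off the line, at squared distance `c` from it with foot at `f`. For
`dᵢ = dist P xᵢ` the numbers `wᵢ = dᵢ + (xᵢ - f)` (`hyperbolaCoord`) and `zᵢ = dᵢ - (xᵢ - f)`
satisfy `wᵢ zᵢ = c`, and `wᵢ` increases with `i`. For the gap `Gᵢ = xᵢ₊₁ - xᵢ` the integers
`aᵢ = wᵢ₊₁ - wᵢ` and `bᵢ = zᵢ - zᵢ₊₁` are positive with `aᵢ + bᵢ = 2 Gᵢ` and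
`aᵢ / bᵢ = wᵢ wᵢ₊₁ / c` strictly increasing, so the pairs `(Gᵢ, aᵢ)` are distinct. Hence at
most `K²` gaps are `≤ K`, the gaps add up to at least `∑_{m < K} (n - m²)`, and `K = ⌈√t⌉`
gives the bound.
-/

open Finset
open scoped RealInnerProductSpace

theorem sum_range_two_mul_add_one (K : ℕ) : ∑ g ∈ range K, (2 * g + 1) = K ^ 2 := by
  induction K with
  | zero => rfl
  | succ K ih => rw [sum_range_succ, ih]; ring

theorem card_filter_le_sq_of_injOn {ι : Type*} (s : Finset ι) (G a : ι → ℤ)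
    (ha : ∀ i ∈ s, 0 < a i ∧ a i < 2 * G i) (hinj : Set.InjOn (fun i ↦ (G i, a i)) s)
    (K : ℕ) :
    #{i ∈ s | G i ≤ K} ≤ K ^ 2 := by
  calc #{i ∈ s | G i ≤ K}
      ≤ #((range K).sigma fun g ↦ range (2 * g + 1)) := by
        refine card_le_card_of_injOn (fun i ↦ ⟨(G i - 1).toNat, (a i - 1).toNat⟩) ?_ ?_
        · intro i hi
          simp only [coe_filter, Set.mem_ofPred_eq] at hi
          have := ha i hi.1
          simp only [coe_sigma, Set.mem_sigma_iff, coe_range, Set.mem_Iio]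
          omega
        · intro i hi j hj hij
          simp only [coe_filter, Set.mem_ofPred_eq] at hi hj
          have := ha i hi.1
          have := ha j hj.1
          simp only [Sigma.mk.inj_iff, heq_eq_eq] at hij
          exact hinj hi.1 hj.1 (show (G i, a i) = (G j, a j) by ext <;> simp only <;> omega)
    _ = K ^ 2 := by simp [sum_range_two_mul_add_one]

theorem sum_range_sub_sq_le_sum {ι : Type*} (s : Finset ι) (G : ι → ℤ)
    (hG : ∀ m : ℕ, #{i ∈ s | G i ≤ m} ≤ m ^ 2) (K : ℕ) :
    ∑ m ∈ range K, ((#s : ℤ) - m ^ 2) ≤ ∑ i ∈ s, G i := by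
  have hG_pos : ∀ i ∈ s, 0 < G i := by
    have h0 := hG 0
    rw [Nat.cast_zero, zero_pow two_ne_zero, Nat.le_zero, card_eq_zero, filter_eq_empty_iff] at h0
    exact fun i hi ↦ lt_of_not_ge (h0 hi)
  calc ∑ m ∈ range K, ((#s : ℤ) - m ^ 2)
      ≤ ∑ m ∈ range K, (#{i ∈ s | (m : ℤ) < G i} : ℤ) := by
        refine sum_le_sum fun m _ ↦ ?_
        have hsplit := card_filter_add_card_filter_not (s := s) (fun i ↦ (m : ℤ) < G i)
        simp only [not_lt] at hsplit
        have hle : (#{i ∈ s | G i ≤ m} : ℤ) ≤ m ^ 2 := by exact_mod_cast hG m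
        rw [← hsplit]
        push_cast
        linarith
    _ = ∑ i ∈ s, (#{m ∈ range K | ((m : ℕ) : ℤ) < G i} : ℤ) := by
        simp only [card_filter, Nat.cast_sum]
        exact sum_comm
    _ ≤ ∑ i ∈ s, G i := by
        refine sum_le_sum fun i hi ↦ ?_
        have hsub : #{m ∈ range K | ((m : ℕ) : ℤ) < G i} ≤ (G i).toNat := by
          calc _ ≤ #(range (G i).toNat) := card_le_card fun m hm ↦ by
                simp only [mem_filter, mem_range] at hm ⊢
                omega
            _ = (G i).toNat := card_range _
        have := hG_pos i hi
        omega

theorem Fin.sum_univ_succ_sub_castSucc {M : Type*} [AddCommGroup M] {n : ℕ}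
    (f : Fin (n + 1) → M) :
    ∑ i : Fin n, (f i.succ - f i.castSucc) = f (Fin.last n) - f 0 := by
  cases n with
  | zero => simp
  | succ m =>
    rw [← Fin.succ_last, ← Fin.sum_Iic_sub (Fin.last m)]
    exact (sum_subset (subset_univ _) fun i _ hi ↦ absurd (mem_Iic.2 (Fin.le_last i)) hi).symm

noncomputable def hyperbolaCoord (c u : ℝ) : ℝ := √(u ^ 2 + c) + u

section hyperbolaCoord

variable {c : ℝ}

theorem hyperbolaCoord_pos (hc : 0 < c) (u : ℝ) : 0 < hyperbolaCoord c u := by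
  have : |u| < √(u ^ 2 + c) := by
    rw [← Real.sqrt_sq_eq_abs]
    exact Real.sqrt_lt_sqrt (sq_nonneg u) (by linarith)
  unfold hyperbolaCoord
  linarith [neg_abs_le u]

theorem hyperbolaCoord_mul_sub (hc : 0 ≤ c) (u : ℝ) :
    hyperbolaCoord c u * (√(u ^ 2 + c) - u) = c := by
  have := Real.sq_sqrt (show 0 ≤ u ^ 2 + c by positivity)
  unfold hyperbolaCoord
  linear_combination this

theorem strictMono_hyperbolaCoord (hc : 0 < c) : StrictMono (hyperbolaCoord c) := by
  intro u v huv
  by_contra! h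
  have hu := hyperbolaCoord_mul_sub hc.le u
  have hv := hyperbolaCoord_mul_sub hc.le v
  have hconj_pos : 0 < √(u ^ 2 + c) - u :=
    pos_of_mul_pos_right (by rwa [hu]) (hyperbolaCoord_pos hc u).le
  have hv_pos := hyperbolaCoord_pos hc v
  unfold hyperbolaCoord at *
  set p := √(u ^ 2 + c)
  set q := √(v ^ 2 + c)
  nlinarith [mul_nonneg (sub_nonneg.2 h) hconj_pos.le]

theorem hyperbolaCoord_sub_mul (hc : 0 ≤ c) (u v : ℝ) :
    (2 * (v - u) - (hyperbolaCoord c v - hyperbolaCoord c u)) *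
        (hyperbolaCoord c u * hyperbolaCoord c v) =
      c * (hyperbolaCoord c v - hyperbolaCoord c u) := by
  have hu := hyperbolaCoord_mul_sub hc u
  have hv := hyperbolaCoord_mul_sub hc v
  unfold hyperbolaCoord at *
  linear_combination (√(v ^ 2 + c) + v) * hu - (√(u ^ 2 + c) + u) * hv

end hyperbolaCoord

theorem sum_range_sub_sq_le_of_strictMono {n : ℕ} {y : Fin (n + 1) → ℝ} (hy : StrictMono y)
    {f c : ℝ} (hc : 0 < c) (hgap : ∀ i : Fin n, ∃ k : ℤ, y i.succ - y i.castSucc = k)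
    (hdist : ∀ i, ∃ k : ℤ, √((y i - f) ^ 2 + c) = k) (K : ℕ) :
    ∑ m ∈ range K, ((n : ℝ) - m ^ 2) ≤ y (Fin.last n) - y 0 := by
  choose G hG using hgap
  choose d hd using hdist
  set w : Fin (n + 1) → ℝ := fun i ↦ hyperbolaCoord c (y i - f)
  have hw : StrictMono w := (strictMono_hyperbolaCoord hc).comp fun i j h ↦ by simpa using hy h
  set a : Fin n → ℤ := fun i ↦ G i + d i.succ - d i.castSucc
  have ha : ∀ i, (a i : ℝ) = w i.succ - w i.castSucc := by
    intro i
    simp only [a, w, hyperbolaCoord, hd, Int.cast_sub, Int.cast_add, ← hG]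
    ring
  have hb : ∀ i, ((2 * G i - a i : ℤ) : ℝ) * (w i.castSucc * w i.succ) = c * a i := by
    intro i
    have := hyperbolaCoord_sub_mul hc.le (y i.castSucc - f) (y i.succ - f)
    rw [Int.cast_sub, Int.cast_mul, ha, ← hG]
    push_cast
    linear_combination this
  have ha_pos : ∀ i, 0 < a i := fun i ↦ by
    have := ha i ▸ sub_pos.2 (hw Fin.castSucc_lt_succ)
    exact_mod_cast this
  have hw_pos : ∀ i, 0 < w i := fun i ↦ hyperbolaCoord_pos hc _
  have hb_pos : ∀ i, 0 < 2 * G i - a i := fun i ↦ by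
    have := pos_of_mul_pos_left (hb i ▸ mul_pos hc (Int.cast_pos.2 (ha_pos i)))
      (mul_pos (hw_pos _) (hw_pos _)).le
    exact_mod_cast this
  have hprod : StrictMono fun i : Fin n ↦ w i.castSucc * w i.succ := fun i j hij ↦
    mul_lt_mul'' (hw (Fin.castSucc_lt_castSucc_iff.2 hij)) (hw (Fin.succ_lt_succ_iff.2 hij))
      (hw_pos _).le (hw_pos _).le
  have hinj : Set.InjOn (fun i ↦ (G i, a i)) (univ : Finset (Fin n)) := by
    intro i _ j _ hij
    simp only [Prod.mk.injEq] at hij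
    have hbi := hb i
    rw [hij.1, hij.2] at hbi
    exact hprod.injective <|
      mul_left_cancel₀ (by exact_mod_cast (hb_pos j).ne') (hbi.trans (hb j).symm)
  have hsum := sum_range_sub_sq_le_sum univ G
    (card_filter_le_sq_of_injOn univ G a (fun i _ ↦ ⟨ha_pos i, by linarith [hb_pos i]⟩) hinj) K
  rw [card_univ, Fintype.card_fin] at hsum
  rw [← Fin.sum_univ_succ_sub_castSucc]
  simp only [hG]
  exact_mod_cast hsum

section InnerProductSpace

variable {E : Type*} [NormedAddCommGroup E] [InnerProductSpace ℝ E]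

theorem exists_dist_add_smul_eq_sqrt {A e P : E} (he : ‖e‖ = 1)
    (hP : ∀ s : ℝ, P ≠ A + s • e) :
    ∃ f c : ℝ, 0 < c ∧ ∀ s : ℝ, dist P (A + s • e) = √((s - f) ^ 2 + c) := by
  set f := ⟪P - A, e⟫
  set u := P - A - f • e
  have hue : ⟪u, e⟫ = 0 := by
    simp only [u, f, inner_sub_left, real_inner_smul_left, real_inner_self_eq_norm_sq, he]
    ring
  have hu : u ≠ 0 := fun h ↦ hP f (sub_eq_zero.1 (by rw [← h]; simp only [u]; abel))
  refine ⟨f, ‖u‖ ^ 2, by positivity, fun s ↦ ?_⟩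
  rw [dist_eq_norm, ← Real.sqrt_sq (norm_nonneg _),
    show P - (A + s • e) = u + (f - s) • e by simp only [u]; module, norm_add_sq_real,
    real_inner_smul_right, hue, norm_smul, he, Real.norm_eq_abs]
  rw [mul_one, sq_abs]
  ring_nf

theorem dist_add_smul_add_smul {A e : E} (he : ‖e‖ = 1) (s s' : ℝ) :
    dist (A + s • e) (A + s' • e) = |s - s'| := by
  rw [dist_add_left, dist_eq_norm, ← sub_smul, norm_smul, he, mul_one, Real.norm_eq_abs]

theorem segment_eq_image_add_smul {A B : E} (hAB : A ≠ B) :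
    segment ℝ A B = (fun s : ℝ ↦ A + s • (‖B - A‖⁻¹ • (B - A))) '' Set.Icc 0 (dist A B) := by
  have hb : 0 < ‖B - A‖ := norm_pos_iff.2 (sub_ne_zero.2 hAB.symm)
  rw [dist_comm, dist_eq_norm]
  ext q
  simp only [segment_eq_image', Set.mem_image, Set.mem_Icc]
  constructor
  · rintro ⟨θ, ⟨h0, h1⟩, rfl⟩
    refine ⟨θ * ‖B - A‖, ⟨by positivity, by nlinarith⟩, ?_⟩
    rw [smul_smul, mul_assoc, mul_inv_cancel₀ hb.ne', mul_one]
  · rintro ⟨s, ⟨h0, h1⟩, rfl⟩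
    exact ⟨s * ‖B - A‖⁻¹, ⟨by positivity, (div_le_one hb).2 h1⟩, by rw [smul_smul]⟩

theorem exists_mem_forall_ne_add_smul {s : Set E} (hs : ¬ Collinear ℝ s) (A e : E) :
    ∃ P ∈ s, ∀ r : ℝ, P ≠ A + r • e := by
  by_contra! h
  refine hs ((collinear_iff_exists_forall_eq_smul_vadd _).2 ⟨A, e, fun p hp ↦ ?_⟩)
  obtain ⟨r, hr⟩ := h p hp
  exact ⟨r, by rw [hr, vadd_eq_add, add_comm]⟩

theorem ncard_segment_same_inter_le_one (A : E) (s : Set E) :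
    (segment ℝ A A ∩ s).ncard ≤ 1 := by
  rw [segment_same]
  exact (Set.ncard_le_ncard Set.inter_subset_left (Set.finite_singleton A)).trans
    (Set.ncard_singleton A).le

theorem sum_range_sub_sq_le_dist {M : Finset E} (hM : ¬ Collinear ℝ (M : Set E))
    (hMdist : ∀ p ∈ M, ∀ q ∈ M, ∃ z : ℤ, dist p q = z) {A B : E} {t : ℕ} (ht : 2 ≤ t)
    (hcard : (segment ℝ A B ∩ (M : Set E)).ncard = t) (K : ℕ) :
    ∑ m ∈ range K, ((t : ℝ) - 1 - m ^ 2) ≤ dist A B := by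
  have hAB : A ≠ B := by
    rintro rfl
    have := ncard_segment_same_inter_le_one A (M : Set E)
    omega
  set e := ‖B - A‖⁻¹ • (B - A)
  have he : ‖e‖ = 1 := norm_smul_inv_norm (sub_ne_zero.2 hAB.symm)
  set ℓ : ℝ → E := fun s ↦ A + s • e
  have hℓ : ∀ s s', dist (ℓ s) (ℓ s') = |s - s'| := dist_add_smul_add_smul he
  have hℓ_inj : Function.Injective ℓ := fun s s' h ↦ by
    simpa [sub_eq_zero] using (hℓ s s').symm.trans (dist_eq_zero.2 h)
  set Y := Set.Icc 0 (dist A B) ∩ ℓ ⁻¹' M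
  have hY : Y.Finite := (M.finite_toSet.preimage hℓ_inj.injOn).inter_of_right _
  have hYcard : #hY.toFinset = t := by
    rw [← Set.ncard_eq_toFinset_card _ hY, ← hcard, segment_eq_image_add_smul hAB,
      ← Set.image_inter_preimage, Set.ncard_image_of_injective _ hℓ_inj]
  obtain ⟨n, rfl⟩ : ∃ n, t = n + 1 := ⟨t - 1, by omega⟩
  set y := hY.toFinset.orderEmbOfFin hYcard
  have hyY : ∀ i, y i ∈ Y := fun i ↦ hY.mem_toFinset.1 (hY.toFinset.orderEmbOfFin_mem hYcard i)
  obtain ⟨P, hPM, hP⟩ := exists_mem_forall_ne_add_smul hM A e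
  obtain ⟨f, c, hc, hPdist⟩ := exists_dist_add_smul_eq_sqrt he hP
  have hgap : ∀ i : Fin n, ∃ k : ℤ, y i.succ - y i.castSucc = k := fun i ↦ by
    obtain ⟨k, hk⟩ := hMdist _ (hyY i.succ).2 _ (hyY i.castSucc).2
    refine ⟨k, ?_⟩
    rw [← hk, hℓ, abs_of_pos (sub_pos.2 (y.strictMono Fin.castSucc_lt_succ))]
  have hdist : ∀ i, ∃ k : ℤ, √((y i - f) ^ 2 + c) = k := fun i ↦ by
    obtain ⟨k, hk⟩ := hMdist _ hPM _ (hyY i).2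
    exact ⟨k, (hPdist _).symm.trans hk⟩
  have hchain := sum_range_sub_sq_le_of_strictMono y.strictMono hc hgap hdist K
  have hlast := (hyY (Fin.last n)).1.2
  have hzero := (hyY 0).1.1
  push_cast
  simp only [add_sub_cancel_right]
  linarith

end InnerProductSpace

theorem sum_range_sub_sq_eq (x : ℝ) (K : ℕ) :
    ∑ m ∈ range K, (x - m ^ 2) = K * x - (K - 1) * K * (2 * K - 1) / 6 := by
  induction K with
  | zero => simp
  | succ K ih => rw [sum_range_succ, ih]; push_cast; ring

theorem rpow_bound_le_sum_range_ceil_sqrt (t : ℕ) (ht : 2 ≤ t) :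
    (2 / 3 : ℝ) * (t : ℝ) ^ ((3 : ℝ) / 2) - (3 / 2 : ℝ) * t +
        (5 / 6 : ℝ) * (t : ℝ) ^ ((1 : ℝ) / 2) ≤
      ∑ m ∈ range ⌈√(t : ℝ)⌉₊, ((t : ℝ) - 1 - m ^ 2) := by
  set τ := √(t : ℝ)
  have hτ : τ ^ 2 = t := Real.sq_sqrt (Nat.cast_nonneg t)
  have h12 : (t : ℝ) ^ ((1 : ℝ) / 2) = τ := (Real.sqrt_eq_rpow _).symm
  have h32 : (t : ℝ) ^ ((3 : ℝ) / 2) = τ ^ 3 := by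
    rw [show (3 : ℝ) / 2 = 1 / 2 * (3 : ℕ) by norm_num, Real.rpow_mul (Nat.cast_nonneg t), h12,
      Real.rpow_natCast]
  have hK : τ ≤ ⌈τ⌉₊ := Nat.le_ceil τ
  have hK' : (⌈τ⌉₊ : ℝ) < τ + 1 := Nat.ceil_lt_add_one (Real.sqrt_nonneg _)
  have hτ2 : 2 ≤ τ ^ 2 := hτ ▸ (by exact_mod_cast ht)
  have hτ1 : 1 ≤ τ := by nlinarith
  rw [sum_range_sub_sq_eq, h32, h12, ← hτ]
  set K : ℝ := (⌈τ⌉₊ : ℝ)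
  -- The slack is cubic in K, with value 2τ² - 2τ at K = τ and 2τ² - 2τ - 1 at K = τ + 1;
  -- in between it exceeds linear interpolation by (K - τ)(τ + 1 - K)(K + 2τ - 1/2) / 3.
  nlinarith [mul_nonneg (sub_nonneg.2 hK'.le) (by nlinarith : 0 ≤ 2 * τ ^ 2 - 2 * τ),
    mul_nonneg (sub_nonneg.2 hK) (by nlinarith : 0 ≤ 2 * τ ^ 2 - 2 * τ - 1),
    mul_nonneg (mul_nonneg (sub_nonneg.2 hK) (sub_nonneg.2 hK'.le))
      (by linarith : 0 ≤ K + 2 * τ - 1 / 2)]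

theorem segment_length_t_points_general (M : Finset (EuclideanSpace ℝ (Fin 2)))
    (hM : IsIntegralPointSet M) (A B : EuclideanSpace ℝ (Fin 2)) (b : ℝ)
    (hb : dist A B = b) (t : ℕ)
    (hcard : (segment ℝ A B ∩ (M : Set (EuclideanSpace ℝ (Fin 2)))).ncard = t) :
    (2 / 3 : ℝ) * (t : ℝ) ^ ((3 : ℝ) / 2) - (3 / 2 : ℝ) * (t : ℝ) +
      (5 / 6 : ℝ) * (t : ℝ) ^ ((1 : ℝ) / 2) ≤ b := by
  rcases lt_or_ge t 2 with ht | ht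
  · have hb0 : 0 ≤ b := hb ▸ dist_nonneg
    interval_cases t <;> norm_num <;> exact hb0
  · calc _ ≤ ∑ m ∈ range ⌈√(t : ℝ)⌉₊, ((t : ℝ) - 1 - m ^ 2) :=
          rpow_bound_le_sum_range_ceil_sqrt t ht
      _ ≤ b := hb ▸ sum_range_sub_sq_le_dist hM.1 hM.2 ht hcard _

/-- If a straight line segment of length b contains exactly t points of an
integral point set M in the plane, then b ≥ (2/3)t^{3/2} − (3/2)t + (5/6)t^{1/2}. -/
theorem segment_length_t_points (M : Finset (EuclideanSpace ℝ (Fin 2)))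
    (hM : IsIntegralPointSet M) (A B : EuclideanSpace ℝ (Fin 2)) (b : ℝ)
    (hb : dist A B = b) (t : ℕ) (ht : 1 ≤ t)
    (hcard : (segment ℝ A B ∩ (M : Set (EuclideanSpace ℝ (Fin 2)))).ncard = t) :
    (2 / 3 : ℝ) * (t : ℝ) ^ ((3 : ℝ) / 2) - (3 / 2 : ℝ) * (t : ℝ) +
      (5 / 6 : ℝ) * (t : ℝ) ^ ((1 : ℝ) / 2) ≤ b :=
  segment_length_t_points_general M hM A B b hb t hcard
end

section
/- Let M = {M₁, M₂, M₃, M₄} be an integral point set of four points in the plane with |M₁M₂| = 1, and let l be the line through M₁ and M₂. Then M₃ ∈ l or M₄ ∈ l. -/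
/-!
A point `P` off the line `M₁M₂` satisfies the strict triangle inequality
`|PM₁ - PM₂| < M₁M₂ = 1`, so integrality forces `PM₁ = PM₂`: both `M₃` and `M₄` would lie on the
perpendicular bisector of `M₁M₂`, a line through the midpoint `m`. Writing `t, u` for the signed
positions of `M₃, M₄` on it, Pythagoras gives `a² = t² + 1/4` and `b² = u² + 1/4` with
`a = M₁M₃`, `b = M₁M₄`, hence `|a| - 1/2 < |t| < |a|`, and similarly for `u`. Then
`M₃M₄ = |t - u|` lies strictly between consecutive integers: in `(|a| + |b| - 1, |a| + |b|)` when
`M₃, M₄` are on opposite sides of `m`, and in `(|a| - |b|, |a| - |b| + 1)` when they are on the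
same side with `|t| > |u|`.
-/

open EuclideanGeometry AffineSubspace Module

theorem Int.cast_notMem_Ioo_add_one (n k : ℤ) : (k : ℝ) ∉ Set.Ioo (n : ℝ) (n + 1) := by
  rintro ⟨h₁, h₂⟩
  have : n < k := by exact_mod_cast h₁
  have : k < n + 1 := by exact_mod_cast h₂
  omega

section QuarterShift

variable {a b k : ℤ}

theorem mem_Ioo_of_sq_eq_sq_add_quarter {s : ℝ} (hs : 0 ≤ s)
    (h : (a : ℝ) ^ 2 = s ^ 2 + 1 / 4) : s ∈ Set.Ioo (|(a : ℝ)| - 1 / 2) |(a : ℝ)| := by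
  have ha : a ≠ 0 := by rintro rfl; norm_num at h; nlinarith
  have hA : (1 : ℝ) ≤ |(a : ℝ)| := by exact_mod_cast Int.one_le_abs ha
  rw [← sq_abs] at h
  constructor <;> nlinarith

theorem intCast_ne_add_of_sq_eq_sq_add_quarter {s r : ℝ} (hs : 0 ≤ s) (hr : 0 ≤ r)
    (ha : (a : ℝ) ^ 2 = s ^ 2 + 1 / 4) (hb : (b : ℝ) ^ 2 = r ^ 2 + 1 / 4) :
    (k : ℝ) ≠ s + r := by
  intro hk
  obtain ⟨hs₁, hs₂⟩ := mem_Ioo_of_sq_eq_sq_add_quarter hs ha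
  obtain ⟨hr₁, hr₂⟩ := mem_Ioo_of_sq_eq_sq_add_quarter hr hb
  refine Int.cast_notMem_Ioo_add_one (|a| + |b| - 1) k ⟨?_, ?_⟩ <;> push_cast <;> linarith

theorem intCast_ne_sub_of_sq_eq_sq_add_quarter {s r : ℝ} (hr : 0 ≤ r) (hrs : r < s)
    (ha : (a : ℝ) ^ 2 = s ^ 2 + 1 / 4) (hb : (b : ℝ) ^ 2 = r ^ 2 + 1 / 4) :
    (k : ℝ) ≠ s - r := by
  intro hk
  obtain ⟨hs₁, hs₂⟩ := mem_Ioo_of_sq_eq_sq_add_quarter (hr.trans hrs.le) ha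
  obtain ⟨hr₁, hr₂⟩ := mem_Ioo_of_sq_eq_sq_add_quarter hr hb
  rw [← sq_abs] at ha hb
  -- `|a| - s = 1 / (4 (|a| + s))` decreases as `s` grows
  have hgap : |(a : ℝ)| - s < |(b : ℝ)| - r := by
    by_contra! h
    nlinarith [mul_le_mul_of_nonneg_right h (by linarith : (0 : ℝ) ≤ |(a : ℝ)| + s)]
  refine Int.cast_notMem_Ioo_add_one (|a| - |b|) k ⟨?_, ?_⟩ <;> push_cast <;> linarith

theorem eq_of_sq_eq_sq_add_quarter {t u : ℝ} (ha : (a : ℝ) ^ 2 = t ^ 2 + 1 / 4)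
    (hb : (b : ℝ) ^ 2 = u ^ 2 + 1 / 4) (hk : (k : ℝ) = |t - u|) : t = u := by
  rw [← sq_abs t] at ha
  rw [← sq_abs u] at hb
  rcases le_total (t * u) 0 with hopp | hsame
  · have hsum : |t - u| = |t| + |u| := by
      rw [← abs_of_nonneg (by positivity : 0 ≤ |t| + |u|), ← sq_eq_sq_iff_abs_eq_abs]
      nlinarith [abs_mul_abs_self t, abs_mul_abs_self u, abs_mul t u, abs_of_nonpos hopp]
    exact absurd (hk.trans hsum)
      (intCast_ne_add_of_sq_eq_sq_add_quarter (abs_nonneg t) (abs_nonneg u) ha hb)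
  · have hdiff : |t - u| = |(|t| - |u|)| := by
      rw [← sq_eq_sq_iff_abs_eq_abs]
      nlinarith [abs_mul_abs_self t, abs_mul_abs_self u, abs_mul t u, abs_of_nonneg hsame]
    rcases lt_trichotomy |t| |u| with hlt | heq | hgt
    · rw [abs_sub_comm |t|, abs_of_pos (sub_pos.2 hlt)] at hdiff
      exact absurd (hk.trans hdiff)
        (intCast_ne_sub_of_sq_eq_sq_add_quarter (abs_nonneg t) hlt hb ha)
    · rwa [heq, sub_self, abs_zero, abs_eq_zero, sub_eq_zero] at hdiff
    · rw [abs_of_pos (sub_pos.2 hgt)] at hdiff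
      exact absurd (hk.trans hdiff)
        (intCast_ne_sub_of_sq_eq_sq_add_quarter (abs_nonneg u) hgt ha hb)

end QuarterShift

theorem Collinear.exists_dist_eq_abs {V P : Type*} [NormedAddCommGroup V] [NormedSpace ℝ V]
    [MetricSpace P] [NormedAddTorsor V P] {o p q : P} (h : Collinear ℝ {o, p, q}) :
    ∃ t u : ℝ, dist p o = |t| ∧ dist q o = |u| ∧ dist p q = |t - u| := by
  obtain ⟨v, hv⟩ := (collinear_iff_of_mem (by simp : o ∈ ({o, p, q} : Set P))).1 h
  obtain ⟨r, rfl⟩ := hv p (by simp)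
  obtain ⟨s, rfl⟩ := hv q (by simp)
  refine ⟨r * ‖v‖, s * ‖v‖, by simp [norm_smul], by simp [norm_smul], ?_⟩
  rw [dist_vadd_cancel_right, dist_eq_norm, ← sub_smul, norm_smul, ← sub_mul, Real.norm_eq_abs,
    abs_mul, abs_norm]

section PerpBisector

variable {V P : Type*} [NormedAddCommGroup V] [InnerProductSpace ℝ V] [MetricSpace P]
  [NormedAddTorsor V P] {a b p : P}

theorem abs_dist_sub_dist_lt_of_notMem_affineSpan_pair (hab : a ≠ b)
    (hp : p ∉ line[ℝ, a, b]) : |dist p a - dist p b| < dist a b := by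
  have htriangle : ∀ {x y : P}, x ≠ y → p ∉ line[ℝ, x, y] → dist p x < dist p y + dist y x :=
    fun hxy hp => dist_lt_dist_add_dist_iff.2 fun h =>
      hp (h.collinear.mem_affineSpan_of_mem_of_ne (by simp) (by simp) (by simp) hxy)
  rw [abs_sub_lt_iff]
  constructor
  · linarith [htriangle hab hp, dist_comm a b]
  · rw [Set.pair_comm] at hp
    linarith [htriangle hab.symm hp]

theorem mem_perpBisector_of_dist_eq_intCast (hab : dist a b = 1) (hp : p ∉ line[ℝ, a, b])
    (ha : ∃ z : ℤ, dist p a = z) (hb : ∃ z : ℤ, dist p b = z) : p ∈ perpBisector a b := by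
  obtain ⟨m, hm⟩ := ha
  obtain ⟨n, hn⟩ := hb
  have hlt := abs_dist_sub_dist_lt_of_notMem_affineSpan_pair (dist_ne_zero.1 (by simp [hab])) hp
  rw [hab, hm, hn, ← Int.cast_sub, ← Int.cast_abs, ← Int.cast_one, Int.cast_lt, abs_lt] at hlt
  rw [mem_perpBisector_iff_dist_eq, hm, hn, show m = n by omega]

theorem dist_sq_eq_dist_midpoint_sq_add_of_mem_perpBisector (hp : p ∈ perpBisector a b) :
    dist p a ^ 2 = dist p (midpoint ℝ a b) ^ 2 + (dist a b / 2) ^ 2 := by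
  have := dist_sq_add_dist_sq_eq_two_mul_dist_midpoint_sq_add_half_dist_sq p a b
  rw [← mem_perpBisector_iff_dist_eq.1 hp] at this
  linarith

theorem collinear_perpBisector [Fact (finrank ℝ V = 2)] (hab : a ≠ b) :
    Collinear ℝ (perpBisector a b : Set P) := by
  have : FiniteDimensional ℝ V := .of_fact_finrank_eq_succ 1
  rw [collinear_iff_rank_le_one, ← direction_eq_vectorSpan, direction_perpBisector,
    ← finrank_eq_rank,
    Submodule.finrank_orthogonal_span_singleton (n := 1) (vsub_ne_zero.2 hab.symm)]
  simp

end PerpBisector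

theorem four_point_set_with_unit_distance_general (M1 M2 M3 M4 : EuclideanSpace ℝ (Fin 2))
    (hdistinct : ({M1, M2, M3, M4} : Set (EuclideanSpace ℝ (Fin 2))).ncard = 4)
    (hint : ∀ p ∈ ({M1, M2, M3, M4} : Set (EuclideanSpace ℝ (Fin 2))),
      ∀ q ∈ ({M1, M2, M3, M4} : Set (EuclideanSpace ℝ (Fin 2))),
        ∃ z : ℤ, dist p q = (z : ℝ))
    (h12 : dist M1 M2 = 1) :
    M3 ∈ affineSpan ℝ ({M1, M2} : Set (EuclideanSpace ℝ (Fin 2))) ∨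
      M4 ∈ affineSpan ℝ ({M1, M2} : Set (EuclideanSpace ℝ (Fin 2))) := by
  by_contra! ⟨h3, h4⟩
  have : Fact (finrank ℝ (EuclideanSpace ℝ (Fin 2)) = 2) := ⟨finrank_euclideanSpace_fin⟩
  have h34 : M3 ≠ M4 := by
    rintro rfl
    rw [Set.pair_eq_singleton] at hdistinct
    have := Set.ncard_insert_le M1 {M2, M3}
    have := Set.ncard_insert_le M2 {M3}
    rw [Set.ncard_singleton] at this
    omega
  have hM12 : M1 ≠ M2 := dist_ne_zero.1 (by simp [h12])
  have hP3 := mem_perpBisector_of_dist_eq_intCast h12 h3 (hint _ (by simp) _ (by simp))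
    (hint _ (by simp) _ (by simp))
  have hP4 := mem_perpBisector_of_dist_eq_intCast h12 h4 (hint _ (by simp) _ (by simp))
    (hint _ (by simp) _ (by simp))
  have hcol : Collinear ℝ {midpoint ℝ M1 M2, M3, M4} :=
    (collinear_perpBisector hM12).subset
      (by simp [Set.insert_subset_iff, midpoint_mem_perpBisector, hP3, hP4])
  obtain ⟨t, u, ht, hu, htu⟩ := hcol.exists_dist_eq_abs
  obtain ⟨a, ha⟩ := hint M3 (by simp) M1 (by simp)
  obtain ⟨b, hb⟩ := hint M4 (by simp) M1 (by simp)
  obtain ⟨k, hk⟩ := hint M3 (by simp) M4 (by simp)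
  have hat := dist_sq_eq_dist_midpoint_sq_add_of_mem_perpBisector hP3
  have hbu := dist_sq_eq_dist_midpoint_sq_add_of_mem_perpBisector hP4
  rw [ha, ht, sq_abs, h12] at hat
  rw [hb, hu, sq_abs, h12] at hbu
  have htu_eq : t = u :=
    eq_of_sq_eq_sq_add_quarter (a := a) (b := b) (by linarith) (by linarith) (hk.symm.trans htu)
  exact h34 (dist_eq_zero.1 (by rw [htu, htu_eq, sub_self, abs_zero]))

/-- If {M₁, M₂, M₃, M₄} is an integral point set of four points in the plane with
|M₁M₂| = 1, then M₃ or M₄ lies on the line through M₁ and M₂. -/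
theorem four_point_set_with_unit_distance (M1 M2 M3 M4 : EuclideanSpace ℝ (Fin 2))
    (hdistinct : ({M1, M2, M3, M4} : Set (EuclideanSpace ℝ (Fin 2))).ncard = 4)
    (hnoncol : ¬ Collinear ℝ ({M1, M2, M3, M4} : Set (EuclideanSpace ℝ (Fin 2))))
    (hint : ∀ p ∈ ({M1, M2, M3, M4} : Set (EuclideanSpace ℝ (Fin 2))),
      ∀ q ∈ ({M1, M2, M3, M4} : Set (EuclideanSpace ℝ (Fin 2))),
        ∃ z : ℤ, dist p q = (z : ℝ))
    (h12 : dist M1 M2 = 1) :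
    M3 ∈ affineSpan ℝ ({M1, M2} : Set (EuclideanSpace ℝ (Fin 2))) ∨
      M4 ∈ affineSpan ℝ ({M1, M2} : Set (EuclideanSpace ℝ (Fin 2))) :=
  four_point_set_with_unit_distance_general M1 M2 M3 M4 hdistinct hint h12
end

section
/- Let k ≥ 1; set a = 2^{2^k} − 1 and, for a subset J of {1, ..., k−1}, let c_J = ∏_{j∈J} (2^{2^j} + 1) (with c_∅ = 1). Then c_J divides a, c_J ≡ 1 (mod 4), a/c_J ≡ 3 (mod 4), b_J := (c_J − a/c_J)/2 is an odd integer, and g_J := (c_J + a/c_J)/2 is an even integer. -/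
/-!
Telescoping `(x - 1)(x + 1)(x² + 1) ⋯ (x^{2^{k-1}} + 1) = x^{2^k} - 1` at `x = 2` writes `a` as the
product of the Fermat numbers `F_0, …, F_{k-1}`, so `c_J` is a subproduct and `a / c_J` is the
complementary one. Every `F_j` with `j ≥ 1` is `1 mod 4`, while `F_0 = 3` lies in the complement;
hence `c_J ≡ 1` and `a / c_J ≡ 3 (mod 4)`, so `c_J - a / c_J ≡ 2` and `c_J + a / c_J ≡ 0 (mod 4)`.
-/

open Finset

theorem mul_prod_range_pow_two_pow_add_one {R : Type*} [CommRing R] (x : R) (k : ℕ) :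
    (x - 1) * ∏ j ∈ range k, (x ^ 2 ^ j + 1) = x ^ 2 ^ k - 1 := by
  induction k with
  | zero => simp
  | succ k ih => rw [prod_range_succ, ← mul_assoc, ih, pow_succ, pow_mul]; ring

theorem prod_sdiff_mul_prod_two_pow_two_pow_add_one {k : ℕ} {J : Finset ℕ} (hJ : J ⊆ range k) :
    (∏ j ∈ range k \ J, ((2 : ℤ) ^ 2 ^ j + 1)) * ∏ j ∈ J, ((2 : ℤ) ^ 2 ^ j + 1) =
      2 ^ 2 ^ k - 1 := by
  rw [prod_sdiff hJ]
  simpa using mul_prod_range_pow_two_pow_add_one (2 : ℤ) k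

theorem two_pow_two_pow_add_one_modEq_one {j : ℕ} (hj : j ≠ 0) :
    (2 : ℤ) ^ 2 ^ j + 1 ≡ 1 [ZMOD 4] := by
  have h4 : (4 : ℤ) ∣ 2 ^ 2 ^ j := by
    simpa using pow_dvd_pow (2 : ℤ) (Nat.one_lt_two_pow hj)
  simpa using (Int.modEq_zero_iff_dvd.2 h4).add_right 1

theorem prod_two_pow_two_pow_add_one_modEq_one {s : Finset ℕ} (hs : 0 ∉ s) :
    ∏ j ∈ s, ((2 : ℤ) ^ 2 ^ j + 1) ≡ 1 [ZMOD 4] :=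
  Int.ModEq.prod_one fun _ hj => two_pow_two_pow_add_one_modEq_one (ne_of_mem_of_not_mem hj hs)

theorem prod_two_pow_two_pow_add_one_modEq_three {s : Finset ℕ} (hs : 0 ∈ s) :
    ∏ j ∈ s, ((2 : ℤ) ^ 2 ^ j + 1) ≡ 3 [ZMOD 4] :=
  Int.prod_modEq_single (fun h => absurd hs h)
    fun _ _ hj => two_pow_two_pow_add_one_modEq_one hj

theorem exists_odd_two_mul_eq_sub {c d : ℤ} (hc : c ≡ 1 [ZMOD 4]) (hd : d ≡ 3 [ZMOD 4]) :
    ∃ b : ℤ, Odd b ∧ 2 * b = c - d := by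
  unfold Int.ModEq at hc hd
  exact ⟨(c - d) / 2, Int.odd_iff.2 (by omega), by omega⟩

theorem exists_even_two_mul_eq_add {c d : ℤ} (hc : c ≡ 1 [ZMOD 4]) (hd : d ≡ 3 [ZMOD 4]) :
    ∃ g : ℤ, Even g ∧ 2 * g = c + d := by
  unfold Int.ModEq at hc hd
  exact ⟨(c + d) / 2, Int.even_iff.2 (by omega), by omega⟩

/-- For k ≥ 1, a = 2^{2^k} − 1 and c_J = ∏_{j∈J} (2^{2^j} + 1) over J ⊆ {1,…,k−1}:
c_J divides a, c_J ≡ 1 (mod 4), a/c_J ≡ 3 (mod 4), b_J = (c_J − a/c_J)/2 is an odd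
integer and g_J = (c_J + a/c_J)/2 is an even integer. -/
theorem c_J_properties (k : ℕ) (hk : 1 ≤ k) (J : Finset ℕ)
    (hJ : J ⊆ Finset.Icc 1 (k - 1)) :
    ((∏ j ∈ J, ((2 : ℤ) ^ (2 ^ j) + 1)) ∣ (2 ^ (2 ^ k) - 1)) ∧
    (∏ j ∈ J, ((2 : ℤ) ^ (2 ^ j) + 1)) % 4 = 1 ∧
    (((2 : ℤ) ^ (2 ^ k) - 1) / ∏ j ∈ J, ((2 : ℤ) ^ (2 ^ j) + 1)) % 4 = 3 ∧
    (∃ b : ℤ, Odd b ∧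
      2 * b = (∏ j ∈ J, ((2 : ℤ) ^ (2 ^ j) + 1)) -
        ((2 : ℤ) ^ (2 ^ k) - 1) / ∏ j ∈ J, ((2 : ℤ) ^ (2 ^ j) + 1)) ∧
    (∃ g : ℤ, Even g ∧
      2 * g = (∏ j ∈ J, ((2 : ℤ) ^ (2 ^ j) + 1)) +
        ((2 : ℤ) ^ (2 ^ k) - 1) / ∏ j ∈ J, ((2 : ℤ) ^ (2 ^ j) + 1)) := by
  have hJk : J ⊆ range k := fun j hj => mem_range.2 (by have := mem_Icc.1 (hJ hj); omega)
  have h0J : 0 ∉ J := fun h => by simpa using (mem_Icc.1 (hJ h)).1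
  have h0 : 0 ∈ range k \ J := mem_sdiff.2 ⟨mem_range.2 hk, h0J⟩
  have hsplit := prod_sdiff_mul_prod_two_pow_two_pow_add_one hJk
  have hquot : ((2 : ℤ) ^ 2 ^ k - 1) / ∏ j ∈ J, ((2 : ℤ) ^ 2 ^ j + 1) =
      ∏ j ∈ range k \ J, ((2 : ℤ) ^ 2 ^ j + 1) := by
    rw [← hsplit, Int.mul_ediv_cancel _ (prod_pos fun j _ => by positivity).ne']
  have hc := prod_two_pow_two_pow_add_one_modEq_one h0J
  have hd := prod_two_pow_two_pow_add_one_modEq_three h0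
  rw [hquot]
  exact ⟨Dvd.intro_left _ hsplit, hc, hd, exists_odd_two_mul_eq_sub hc hd,
    exists_even_two_mul_eq_add hc hd⟩
end

section
/- For k ≥ 1, let a = 2^{2^k} − 1 and for J ⊆ {1,...,k−1} let c_J = ∏_{j∈J}(2^{2^j}+1) and b_J = (c_J − a/c_J)/2. Then the map J ↦ b_J is injective, and moreover b_J ≠ −b_K for all subsets J, K; in particular all 2^k points (±b_J/2, 0) are pairwise distinct. -/
/-!
The map `x ↦ x - a / x` is strictly increasing on positive divisors of `a ≥ 0`, so `b_J = b_K`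
forces `c_J = c_K` (the halving is exact because `a`, hence each `c_J` and `a / c_J`, is odd),
and distinct Fermat numbers are coprime, so `c_J = c_K` forces `J = K`.
If instead `b_J = -b_K`, then `(c_J + c_K) (c_J c_K - a) = 0`, i.e. `c_J c_K = a`; but every
`2^(2^j) + 1` with `j ≥ 1` is `1` mod `4`, while `a = 2^(2^k) - 1` is `3` mod `4`.
-/

open Finset

theorem Finset.prod_injective_of_pairwise_coprime {ι : Type*} {f : ι → ℕ}
    (hf : Pairwise fun i j => Nat.Coprime (f i) (f j)) (h1 : ∀ i, f i ≠ 1) :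
    Function.Injective fun s : Finset ι => ∏ i ∈ s, f i := by
  have subset_of_eq : ∀ s t : Finset ι, ∏ i ∈ s, f i = ∏ i ∈ t, f i → s ⊆ t := by
    intro s t h i hi
    by_contra hit
    have hdvd : f i ∣ ∏ j ∈ t, f j := h ▸ dvd_prod_of_mem f hi
    have hcop : Nat.Coprime (f i) (∏ j ∈ t, f j) :=
      Nat.Coprime.prod_right fun j hj => hf fun hij => hit (hij ▸ hj)
    exact h1 i (hcop.eq_one_of_dvd hdvd)
  exact fun s t h => (subset_of_eq s t h).antisymm (subset_of_eq t s h.symm)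

namespace Int

variable {a x y : ℤ}

theorem eq_of_sub_ediv_eq (ha : 0 ≤ a) (hx : 0 < x) (hy : 0 < y) (hxa : x ∣ a) (hya : y ∣ a)
    (h : x - a / x = y - a / y) : x = y := by
  have hx' := Int.mul_ediv_cancel' hxa
  have hy' := Int.mul_ediv_cancel' hya
  have hfactor : (x - y) * (x * y + a) = 0 := by
    linear_combination (x * y) * h + y * hx' - x * hy'
  have hpos : 0 < x * y + a := by positivity
  exact sub_eq_zero.mp ((mul_eq_zero.mp hfactor).resolve_right hpos.ne')

theorem mul_eq_of_sub_ediv_eq_neg (hx : 0 < x) (hy : 0 < y) (hxa : x ∣ a) (hya : y ∣ a)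
    (h : x - a / x = -(y - a / y)) : x * y = a := by
  have hx' := Int.mul_ediv_cancel' hxa
  have hy' := Int.mul_ediv_cancel' hya
  have hfactor : (x + y) * (x * y - a) = 0 := by
    linear_combination (x * y) * h + x * hy' + y * hx'
  have hpos : 0 < x + y := by positivity
  exact sub_eq_zero.mp ((mul_eq_zero.mp hfactor).resolve_left hpos.ne')

theorem even_sub_ediv (ha : Odd a) (hxa : x ∣ a) : Even (x - a / x) := by
  obtain ⟨d, rfl⟩ := hxa
  obtain ⟨hx, hd⟩ := odd_mul.mp ha
  have hx0 : x ≠ 0 := by rintro rfl; exact not_odd_zero hx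
  rw [mul_ediv_cancel_left d hx0]
  exact hx.sub_odd hd

theorem prod_two_pow_two_pow_add_one (s : Finset ℕ) :
    ∏ j ∈ s, ((2 : ℤ) ^ 2 ^ j + 1) = ((∏ j ∈ s, Nat.fermatNumber j : ℕ) : ℤ) := by
  push_cast [Nat.fermatNumber]
  rfl

theorem prod_range_two_pow_two_pow_add_one (n : ℕ) :
    ∏ j ∈ Finset.range n, ((2 : ℤ) ^ 2 ^ j + 1) = 2 ^ 2 ^ n - 1 := by
  rw [prod_two_pow_two_pow_add_one, Nat.prod_fermatNumber,
    Nat.cast_sub (Nat.two_lt_fermatNumber n).le]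
  push_cast [Nat.fermatNumber]
  ring

end Int

theorem ZMod.two_pow_two_pow_eq_zero_four {n : ℕ} (hn : n ≠ 0) : (2 : ZMod 4) ^ 2 ^ n = 0 :=
  pow_eq_zero_of_le (Nat.le_self_pow hn 2) (by decide)

theorem ZMod.prod_two_pow_two_pow_add_one_four {s : Finset ℕ} (hs : 0 ∉ s) :
    ∏ j ∈ s, ((2 : ZMod 4) ^ 2 ^ j + 1) = 1 :=
  prod_eq_one fun j hj => by
    rw [ZMod.two_pow_two_pow_eq_zero_four (ne_of_mem_of_not_mem hj hs), zero_add]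

/-- For k ≥ 1, a = 2^{2^k} − 1, c_J = ∏_{j∈J}(2^{2^j}+1) and
b_J = (c_J − a/c_J)/2 over subsets J ⊆ {1,…,k−1}: the map J ↦ b_J is injective
and b_J ≠ −b_K for all such subsets J, K. -/
theorem b_J_injective_and_no_negation (k : ℕ) (hk : 1 ≤ k)
    (a : ℤ) (ha : a = 2 ^ (2 ^ k) - 1)
    (c : Finset ℕ → ℤ) (hc : ∀ J, c J = ∏ j ∈ J, ((2 : ℤ) ^ (2 ^ j) + 1))
    (b : Finset ℕ → ℤ) (hbdef : ∀ J, b J = (c J - a / c J) / 2) :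
    ∀ J K : Finset ℕ, J ⊆ Finset.Icc 1 (k - 1) → K ⊆ Finset.Icc 1 (k - 1) →
      (b J = b K → J = K) ∧ b J ≠ -b K := by
  have hdvd : ∀ J ⊆ Icc 1 (k - 1), c J ∣ a := fun J hJ => by
    rw [hc, ha, ← Int.prod_range_two_pow_two_pow_add_one]
    exact prod_dvd_prod_of_subset _ _ _ fun j hj => by
      have := mem_Icc.mp (hJ hj); rw [mem_range]; omega
  have hpos : ∀ J, 0 < c J := fun J => by
    rw [hc]; exact prod_pos fun j _ => by positivity
  have hodd : Odd a := by
    rw [ha]; exact (Int.even_pow.mpr ⟨even_two, by positivity⟩).sub_odd odd_one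
  have h2b : ∀ J ⊆ Icc 1 (k - 1), 2 * b J = c J - a / c J := fun J hJ => by
    rw [hbdef]; exact Int.mul_ediv_cancel' (Int.even_sub_ediv hodd (hdvd J hJ)).two_dvd
  have hc_mod_four : ∀ J ⊆ Icc 1 (k - 1), (c J : ZMod 4) = 1 := fun J hJ => by
    push_cast [hc]
    exact ZMod.prod_two_pow_two_pow_add_one_four fun h0 => by simpa using hJ h0
  intro J K hJ hK
  refine ⟨fun h => ?_, fun h => ?_⟩
  · have hcJK : c J = c K := Int.eq_of_sub_ediv_eq
      (by rw [ha]; exact sub_nonneg.mpr (one_le_pow₀ one_le_two)) (hpos J) (hpos K)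
      (hdvd J hJ) (hdvd K hK) (by rw [← h2b J hJ, ← h2b K hK, h])
    rw [hc, hc, Int.prod_two_pow_two_pow_add_one, Int.prod_two_pow_two_pow_add_one] at hcJK
    exact prod_injective_of_pairwise_coprime (fun _ _ => Nat.coprime_fermatNumber_fermatNumber)
      Nat.fermatNumber_ne_one (Nat.cast_injective hcJK)
  · have hcJK : c J * c K = a := Int.mul_eq_of_sub_ediv_eq_neg (hpos J) (hpos K)
      (hdvd J hJ) (hdvd K hK) (by rw [← h2b J hJ, ← h2b K hK, h]; ring)
    have := congrArg (Int.cast : ℤ → ZMod 4) hcJK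
    push_cast [hc_mod_four J hJ, hc_mod_four K hK, ha,
      ZMod.two_pow_two_pow_eq_zero_four (by omega : k ≠ 0)] at this
    exact absurd this (by decide)
end

section
/- For every integer n ≥ 3 there exists an integral point set M of n points in the plane (points not all collinear, all pairwise distances integers) containing two points at distance exactly 1, and moreover M can be taken to consist of n−1 collinear points together with one point off that line. -/
/-!
Put the apex `T = (1/2, √N/2)` above the unit segment `[(0,0), (1,0)]`; then
`4 |(x,0) - T|² = (2x - 1)² + N`. If `N = d * e` with `N ≡ 3 (mod 4)`, the integers
`x = (e - d + 2)/4` and `y = (e + d)/4` satisfy `(2x - 1)² + N = (2y)²`, because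
`(e - d)² + 4de = (e + d)²`; so `(x,0)` is at integral distance `y` from `T`, and distinct
positive divisors `d` give distinct `x`. For `N = a(a + 2)` with `a = 5^t`, the divisors
`5^0, …, 5^t` and `a + 2` give `t + 2` such abscissae, among them `1` (from `d = a`) and `0`
(from `d = a + 2`).
-/

open Finset

noncomputable def apex (N : ℤ) : EuclideanSpace ℝ (Fin 2) := !₂[1 / 2, √N / 2]

noncomputable def fan (N : ℤ) (S : Finset ℤ) : Finset (EuclideanSpace ℝ (Fin 2)) :=
  insert (apex N) (S.image fun x : ℤ => !₂[(x : ℝ), 0])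

lemma dist_axis_axis (x y : ℝ) : dist !₂[x, 0] !₂[y, 0] = |x - y| := by
  simp [EuclideanSpace.dist_eq, Fin.sum_univ_two, Real.dist_eq, Real.sqrt_sq_eq_abs]

lemma dist_axis_apex {N x y : ℤ} (hN : 0 ≤ N) (h : (2 * x - 1) ^ 2 + N = (2 * y) ^ 2) :
    dist !₂[(x : ℝ), 0] (apex N) = |y| := by
  have hN' : (√N : ℝ) ^ 2 = N := Real.sq_sqrt (by exact_mod_cast hN)
  have h' : ((2 * x - 1) ^ 2 + N : ℝ) = (2 * y) ^ 2 := by exact_mod_cast h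
  have hsq : ((x : ℝ) - 1 / 2) ^ 2 + (0 - √N / 2) ^ 2 = (y : ℝ) ^ 2 := by
    linear_combination h' / 4 + hN' / 4
  rw [apex, EuclideanSpace.dist_eq, Fin.sum_univ_two]
  simp only [Matrix.cons_val_zero, Matrix.cons_val_one, Real.dist_eq, sq_abs, hsq,
    Real.sqrt_sq_eq_abs, Int.cast_abs]

lemma apex_apply_one_pos {N : ℤ} (hN : 0 < N) : 0 < apex N 1 := by
  simp only [apex, PiLp.toLp_apply, Matrix.cons_val_one, Matrix.cons_val_zero]
  positivity

lemma apex_notMem_image_axis {N : ℤ} (hN : 0 < N) (S : Finset ℤ) :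
    apex N ∉ S.image fun x : ℤ => !₂[(x : ℝ), 0] := by
  rintro h
  obtain ⟨x, -, hx⟩ := mem_image.1 h
  simpa [← hx] using apex_apply_one_pos hN

lemma card_fan {N : ℤ} (hN : 0 < N) (S : Finset ℤ) : (fan N S).card = S.card + 1 := by
  rw [fan, card_insert_of_notMem (apex_notMem_image_axis hN S), card_image_of_injective]
  intro x y h
  simpa using congrArg (· 0) h

lemma apex_mem_fan (N : ℤ) (S : Finset ℤ) : apex N ∈ fan N S := mem_insert_self _ _

lemma axis_mem_fan {N x : ℤ} {S : Finset ℤ} (hx : x ∈ S) : !₂[(x : ℝ), 0] ∈ fan N S :=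
  mem_insert_of_mem (mem_image_of_mem _ hx)

lemma collinear_fan_sdiff_apex (N : ℤ) (S : Finset ℤ) :
    Collinear ℝ ((fan N S : Set (EuclideanSpace ℝ (Fin 2))) \ {apex N}) := by
  rw [collinear_iff_exists_forall_eq_smul_vadd]
  refine ⟨0, !₂[1, 0], ?_⟩
  rintro p ⟨hp, hpa⟩
  obtain ⟨x, -, rfl⟩ := mem_image.1 ((mem_insert.1 hp).resolve_left hpa)
  exact ⟨x, by ext i; fin_cases i <;> simp⟩

lemma not_collinear_fan {N : ℤ} (hN : 0 < N) {S : Finset ℤ} (hS : 1 < S.card) :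
    ¬ Collinear ℝ (fan N S : Set (EuclideanSpace ℝ (Fin 2))) := by
  obtain ⟨x, hx, y, hy, hxy⟩ := one_lt_card.1 hS
  let axis := (LinearMap.ker (EuclideanSpace.projₗ (𝕜 := ℝ) (1 : Fin 2))).toAffineSubspace
  intro hcol
  have hline : line[ℝ, !₂[(x : ℝ), 0], !₂[(y : ℝ), 0]] ≤ axis :=
    affineSpan_pair_le_of_mem_of_mem (by simp [axis]) (by simp [axis])
  have hapex := hline <| hcol.mem_affineSpan_of_mem_of_ne (axis_mem_fan hx) (axis_mem_fan hy)
    (apex_mem_fan N S) fun h => hxy (by simpa using congrArg (· 0) h)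
  exact (apex_apply_one_pos hN).ne' (by simpa [axis] using hapex)

lemma fan_dist_integral {N : ℤ} (hN : 0 ≤ N) {S : Finset ℤ}
    (hS : ∀ x ∈ S, ∃ y : ℤ, (2 * x - 1) ^ 2 + N = (2 * y) ^ 2) :
    ∀ p ∈ fan N S, ∀ q ∈ fan N S, ∃ z : ℤ, dist p q = z := by
  have dist_apex : ∀ p ∈ fan N S, ∃ z : ℤ, dist p (apex N) = z := by
    intro p hp
    rcases mem_insert.1 hp with rfl | hp
    · exact ⟨0, by simp⟩
    obtain ⟨x, hx, rfl⟩ := mem_image.1 hp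
    obtain ⟨y, hy⟩ := hS x hx
    exact ⟨|y|, dist_axis_apex hN hy⟩
  intro p hp q hq
  rcases mem_insert.1 hq with rfl | hq
  · exact dist_apex p hp
  rcases mem_insert.1 hp with rfl | hp
  · rw [dist_comm]; exact dist_apex q (mem_insert_of_mem hq)
  obtain ⟨x, -, rfl⟩ := mem_image.1 hp
  obtain ⟨y, -, rfl⟩ := mem_image.1 hq
  exact ⟨|x - y|, by rw [dist_axis_axis]; push_cast; rfl⟩

lemma four_dvd_of_mul_emod_four_eq_three {d e : ℤ} (h : d * e % 4 = 3) :
    4 ∣ d + e ∧ 4 ∣ e - d + 2 := by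
  have hd : d % 4 = 1 ∨ d % 4 = 3 ∨ d % 4 = 0 ∨ d % 4 = 2 := by omega
  have he : e % 4 = 1 ∨ e % 4 = 3 ∨ e % 4 = 0 ∨ e % 4 = 2 := by omega
  rw [Int.mul_emod] at h
  rcases hd with hd | hd | hd | hd <;> rcases he with he | he | he | he <;>
    simp only [hd, he] at h <;> omega

def axisCoord (N d : ℤ) : ℤ := (N / d - d + 2) / 4

lemma exists_sq_eq_two_mul_axisCoord {N d : ℤ} (hN : N % 4 = 3) (hdN : d ∣ N) :
    ∃ y : ℤ, (2 * axisCoord N d - 1) ^ 2 + N = (2 * y) ^ 2 := by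
  obtain ⟨e, rfl⟩ := hdN
  have hd : d ≠ 0 := by rintro rfl; simp at hN
  obtain ⟨⟨y, hy⟩, ⟨x, hx⟩⟩ := four_dvd_of_mul_emod_four_eq_three hN
  refine ⟨y, ?_⟩
  rw [axisCoord, Int.mul_ediv_cancel_left _ hd, hx, Int.mul_ediv_cancel_left _ (by norm_num)]
  obtain rfl : e = 4 * y - d := by omega
  obtain rfl : d = 2 * y - 2 * x + 1 := by omega
  ring

lemma axisCoord_injOn {N : ℤ} (hN : 0 < N) (hN4 : N % 4 = 3) :
    Set.InjOn (axisCoord N) {d | 0 < d ∧ d ∣ N} := by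
  rintro d ⟨hd, e, he⟩ d' ⟨hd', e', he'⟩ h
  have hdiv := (four_dvd_of_mul_emod_four_eq_three (he ▸ hN4)).2
  have hdiv' := (four_dvd_of_mul_emod_four_eq_three (he' ▸ hN4)).2
  have hq : N / d = e := by rw [he, Int.mul_ediv_cancel_left _ hd.ne']
  have hq' : N / d' = e' := by rw [he', Int.mul_ediv_cancel_left _ hd'.ne']
  rw [axisCoord, axisCoord, hq, hq'] at h
  have hdiff : e - d = e' - d' := by omega
  have hsum : e + d = e' + d' := by
    have hsq : (e + d) ^ 2 = (e' + d') ^ 2 := by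
      linear_combination (e - d + e' - d') * hdiff - 4 * he'.symm.trans he
    nlinarith [pos_of_mul_pos_right (he ▸ hN) hd.le, pos_of_mul_pos_right (he' ▸ hN) hd'.le]
  omega

lemma exists_abscissae_pow_five (t : ℕ) :
    ∃ S : Finset ℤ, S.card = t + 2 ∧ 0 ∈ S ∧ 1 ∈ S ∧
    ∀ x ∈ S, ∃ y : ℤ, (2 * x - 1) ^ 2 + 5 ^ t * (5 ^ t + 2) = (2 * y) ^ 2 := by
  set a : ℤ := 5 ^ t
  set N := a * (a + 2)
  have hN : 0 < N := by positivity
  have hN4 : N % 4 = 3 := by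
    have ha : a % 4 = 1 := by
      simpa [Int.ModEq] using (show (5 : ℤ) ≡ 1 [ZMOD 4] by decide).pow t
    rw [Int.mul_emod, Int.add_emod, ha]
    rfl
  have haN : N / a = a + 2 := Int.mul_ediv_cancel_left _ (by positivity)
  have haN' : N / (a + 2) = a := Int.mul_ediv_cancel _ (by positivity)
  let D : Finset ℤ := insert (a + 2) ((range (t + 1)).image (5 ^ ·))
  have hD : ∀ d ∈ D, 0 < d ∧ d ∣ N := by
    simp only [D, mem_insert, mem_image, mem_range]
    rintro d (rfl | ⟨j, hj, rfl⟩)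
    · exact ⟨by positivity, dvd_mul_left _ _⟩
    · exact ⟨by positivity, (pow_dvd_pow 5 (by omega)).mul_right _⟩
  have hDcard : D.card = t + 2 := by
    rw [card_insert_of_notMem,
      card_image_of_injective _ (pow_right_injective₀ (by norm_num) (by norm_num)), card_range]
    simp only [mem_image, mem_range, not_exists, not_and]
    intro j hj h
    have : (5 : ℤ) ^ j ≤ a := pow_le_pow_right₀ (by norm_num) (by omega)
    omega
  refine ⟨D.image (axisCoord N), ?_, mem_image.2 ⟨a + 2, mem_insert_self _ _, ?_⟩,
    mem_image.2 ⟨a, mem_insert_of_mem (mem_image.2 ⟨t, by simp, rfl⟩), ?_⟩, ?_⟩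
  · rw [card_image_of_injOn ((axisCoord_injOn hN hN4).mono hD), hDcard]
  · simp [axisCoord, haN']
  · simp [axisCoord, haN]
  · intro x hx
    obtain ⟨d, hd, rfl⟩ := mem_image.1 hx
    exact exists_sq_eq_two_mul_axisCoord hN4 (hD d hd).2

/-- For every n ≥ 3 there is a planar integral point set of n points containing
two points at distance exactly 1, consisting of n−1 collinear points together
with one point off that line. -/
theorem exists_integral_point_set_with_unit_distance (n : ℕ) (hn : 3 ≤ n) :
    ∃ M : Finset (EuclideanSpace ℝ (Fin 2)),
      M.card = n ∧
      ¬ Collinear ℝ (M : Set (EuclideanSpace ℝ (Fin 2))) ∧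
      (∀ p ∈ M, ∀ q ∈ M, ∃ z : ℤ, dist p q = (z : ℝ)) ∧
      (∃ p ∈ M, ∃ q ∈ M, dist p q = 1) ∧
      (∃ A ∈ M, Collinear ℝ ((M : Set (EuclideanSpace ℝ (Fin 2))) \ {A})) := by
  obtain ⟨t, rfl⟩ : ∃ t, n = t + 3 := ⟨n - 3, by omega⟩
  obtain ⟨S, hcard, h0, h1, hS⟩ := exists_abscissae_pow_five t
  have hN : (0 : ℤ) < 5 ^ t * (5 ^ t + 2) := by positivity
  refine ⟨fan _ S, by rw [card_fan hN, hcard], not_collinear_fan hN (by omega),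
    fan_dist_integral hN.le hS, ⟨_, axis_mem_fan h0, _, axis_mem_fan h1, ?_⟩,
    ⟨_, apex_mem_fan _ S, collinear_fan_sdiff_apex _ S⟩⟩
  simp [dist_axis_axis]
end

section
/- If M is an integral point set of n ≥ 4 points in the plane containing two points M₁, M₂ with |M₁M₂| = 1, then the distance 1 occurs in M exactly once, all points of M except one lie on the line through M₁ and M₂, and the remaining point lies on the perpendicular bisector of the segment M₁M₂. -/
/-!
A point `p` off the line `M₁M₂` has integral distances to `M₁` and `M₂` that differ by less than
`|M₁M₂| = 1` (strict triangle inequality), so they are equal: `p` lies on the perpendicular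
bisector of `M₁M₂`. Two distinct points `c₁, c₂` of that bisector cannot have integral distances
`k = |c₁M₁|`, `m = |c₂M₁|`, `d = |c₁c₂|`: since the bisector is a line,
`(4k² - 1) d² = (k² - m² + d²)²`, which would make `4k² - 1 ≡ 3 (mod 4)` a perfect square.
Hence exactly one point `A` lies off the line `M₁M₂`.

Another unit pair `{p, q}` on the line `M₁M₂` has `A` on its perpendicular bisector too, which
forces `{p, q} = {M₁, M₂}`. A unit pair `{B, A}` is impossible: applied to it, the argument above
leaves at most one point off the line `AB`, but all of the at least three points on `M₁M₂` except
`B` are off it.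
-/

open AffineSubspace AffineMap EuclideanGeometry Module

open scoped RealInnerProductSpace

def HasIntegralDistances {P : Type*} [Dist P] (S : Set P) : Prop :=
  ∀ p ∈ S, ∀ q ∈ S, ∃ z : ℤ, dist p q = z

theorem not_isSquare_four_mul_sq_sub_one (k : ℤ) : ¬IsSquare (4 * k ^ 2 - 1) := by
  rintro ⟨r, hr⟩
  have hmod := congrArg (Int.cast : ℤ → ZMod 4) hr
  push_cast at hmod
  generalize (k : ZMod 4) = a at hmod
  generalize (r : ZMod 4) = b at hmod
  revert a b
  decide

theorem eq_zero_of_four_mul_sq_sub_one_mul_sq_eq_sq {k d r : ℤ}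
    (h : (4 * k ^ 2 - 1) * d ^ 2 = r ^ 2) : d = 0 := by
  by_contra hd
  apply not_isSquare_four_mul_sq_sub_one k
  rw [← Rat.isSquare_intCast_iff]
  refine ⟨r / d, ?_⟩
  have hd' : (d : ℚ) ≠ 0 := by exact_mod_cast hd
  field_simp
  exact_mod_cast h

section Affine

variable {k V P : Type*} [DivisionRing k] [AddCommGroup V] [Module k V] [AddTorsor V P]

theorem collinear_of_subset_affineSpan_pair {s : Set P} {p q : P} (h : s ⊆ line[k, p, q]) :
    Collinear k s := by
  have hle : vectorSpan k s ≤ vectorSpan k {p, q} := by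
    rw [← direction_affineSpan, ← direction_affineSpan]
    exact direction_le (affineSpan_le.2 h)
  exact (Submodule.rank_mono hle).trans (collinear_pair k p q)

theorem notMem_affineSpan_pair_of_mem {L : AffineSubspace k P} {a b x : P} (ha : a ∉ L)
    (hb : b ∈ L) (hx : x ∈ L) (hxb : x ≠ b) : x ∉ line[k, b, a] := fun hxba =>
  ha <| affineSpan_pair_le_of_mem_of_mem hx hb <|
    (collinear_insert_of_mem_affineSpan_pair hxba).mem_affineSpan_of_mem_of_ne
      (by simp) (by simp) (by simp) hxb

end Affine

section StrictConvex

variable {V P : Type*} [NormedAddCommGroup V] [NormedSpace ℝ V] [StrictConvexSpace ℝ V]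
  [MetricSpace P] [NormedAddTorsor V P]

theorem abs_dist_sub_dist_lt_of_notMem_affineSpan_pair_s17 {p q r : P} (hqr : q ≠ r)
    (hp : p ∉ line[ℝ, q, r]) : |dist p q - dist p r| < dist q r := by
  have h₁ : dist p q < dist p r + dist r q := dist_lt_dist_add_dist_iff.2 fun hw =>
    hp (hw.collinear.mem_affineSpan_of_mem_of_ne (by simp) (by simp) (by simp) hqr)
  have h₂ : dist p r < dist p q + dist q r := dist_lt_dist_add_dist_iff.2 fun hw =>
    hp (hw.collinear.mem_affineSpan_of_mem_of_ne (by simp) (by simp) (by simp) hqr)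
  rw [dist_comm r q] at h₁
  rw [abs_sub_lt_iff]
  constructor <;> linarith

theorem HasIntegralDistances.dist_eq_dist_of_notMem_affineSpan_pair {S : Set P}
    (hS : HasIntegralDistances S) {p q r : P} (hp : p ∈ S) (hq : q ∈ S) (hr : r ∈ S)
    (hqr : dist q r = 1) (hpqr : p ∉ line[ℝ, q, r]) : dist p q = dist p r := by
  obtain ⟨a, ha⟩ := hS p hp q hq
  obtain ⟨b, hb⟩ := hS p hp r hr
  have hlt := abs_dist_sub_dist_lt_of_notMem_affineSpan_pair_s17 (dist_pos.1 (hqr ▸ one_pos)) hpqr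
  rw [ha, hb, hqr, ← Int.cast_sub, ← Int.cast_abs, ← Int.cast_one, Int.cast_lt,
    Int.abs_lt_one_iff, sub_eq_zero] at hlt
  rw [ha, hb, hlt]

end StrictConvex

section InnerProduct

variable {V P : Type*} [NormedAddCommGroup V] [InnerProductSpace ℝ V] [MetricSpace P]
  [NormedAddTorsor V P]

/-- Stewart's theorem, for a point of the line `ab` given by its affine parameter. -/
theorem dist_sq_lineMap (p a b : P) (t : ℝ) :
    dist p (lineMap a b t) ^ 2 =
      (1 - t) * dist p a ^ 2 + t * dist p b ^ 2 - t * (1 - t) * dist a b ^ 2 := by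
  have hl : p -ᵥ lineMap a b t = (p -ᵥ a) - t • (b -ᵥ a) := by
    rw [lineMap_apply, vsub_vadd_eq_vsub_sub]
  rw [dist_eq_norm_vsub V p, dist_eq_norm_vsub V p a, dist_eq_norm_vsub V p b,
    dist_eq_norm_vsub' V a b, hl, ← vsub_sub_vsub_cancel_right p b a, norm_sub_sq_real,
    norm_sub_sq_real, real_inner_smul_right, norm_smul, Real.norm_eq_abs, mul_pow, sq_abs]
  ring

theorem pair_eq_of_mem_perpBisector {c p q p₁ p₂ : P} (h₁₂ : p₁ ≠ p₂)
    (hp : p ∈ line[ℝ, p₁, p₂]) (hq : q ∈ line[ℝ, p₁, p₂]) (hpq : dist p q = dist p₁ p₂)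
    (hc₁₂ : c ∈ perpBisector p₁ p₂) (hcpq : c ∈ perpBisector p q) :
    ({p, q} : Set P) = {p₁, p₂} := by
  obtain ⟨s, rfl⟩ := mem_affineSpan_pair_iff_exists_lineMap_eq.1 hp
  obtain ⟨t, rfl⟩ := mem_affineSpan_pair_iff_exists_lineMap_eq.1 hq
  have hℓ : dist p₁ p₂ ≠ 0 := dist_ne_zero.2 h₁₂
  have hst : |s - t| = 1 := by
    rwa [dist_lineMap_lineMap, Real.dist_eq, mul_eq_right₀ hℓ] at hpq
  have hsum : s + t = 1 := by
    have e := congrArg (· ^ 2) (mem_perpBisector_iff_dist_eq.1 hcpq)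
    simp only [dist_sq_lineMap, mem_perpBisector_iff_dist_eq.1 hc₁₂] at e
    have hprod : (s - t) * (s + t - 1) * dist p₁ p₂ ^ 2 = 0 := by linear_combination e
    have hst0 : s - t ≠ 0 := fun h => by simp [h] at hst
    have : s + t - 1 = 0 := by simpa [hst0, hℓ] using hprod
    linarith
  rcases abs_eq zero_le_one |>.1 hst with h | h
  · obtain ⟨rfl, rfl⟩ : s = 1 ∧ t = 0 := ⟨by linarith, by linarith⟩
    simp [Set.pair_comm]
  · obtain ⟨rfl, rfl⟩ : s = 0 ∧ t = 1 := ⟨by linarith, by linarith⟩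
    simp

variable [Fact (finrank ℝ V = 2)]

theorem sq_real_inner_eq_of_inner_eq_zero {u v w : V} (hv : v ≠ 0) (hu : ⟪v, u⟫ = 0)
    (hw : ⟪v, w⟫ = 0) : ⟪u, w⟫ ^ 2 = ‖u‖ ^ 2 * ‖w‖ ^ 2 := by
  rcases eq_or_ne u 0 with rfl | hu0
  · simp
  obtain ⟨t, rfl⟩ := Submodule.mem_span_singleton.1
    (Submodule.mem_span_singleton_of_inner_eq_zero_of_inner_eq_zero hv hu0 hw hu)
  rw [real_inner_smul_right, real_inner_self_eq_norm_sq, norm_smul, Real.norm_eq_abs]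
  simp only [mul_pow, sq_abs]
  ring

theorem sq_dist_sub_sq_dist_add_sq_dist_of_mem_perpBisector {p₁ p₂ c₁ c₂ : P} (h : p₁ ≠ p₂)
    (hc₁ : c₁ ∈ perpBisector p₁ p₂) (hc₂ : c₂ ∈ perpBisector p₁ p₂) :
    (dist c₁ p₁ ^ 2 - dist c₂ p₁ ^ 2 + dist c₁ c₂ ^ 2) ^ 2 =
      (4 * dist c₁ p₁ ^ 2 - dist p₁ p₂ ^ 2) * dist c₁ c₂ ^ 2 := by
  set O := midpoint ℝ p₁ p₂
  have apollonius : ∀ c ∈ perpBisector p₁ p₂,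
      dist c p₁ ^ 2 = ‖c -ᵥ O‖ ^ 2 + dist p₁ p₂ ^ 2 / 4 := by
    intro c hc
    have := dist_sq_add_dist_sq_eq_two_mul_dist_midpoint_sq_add_half_dist_sq c p₁ p₂
    rw [← mem_perpBisector_iff_dist_eq.1 hc, dist_eq_norm_vsub V c O] at this
    linarith
  have orth : ∀ {x y : P}, x ∈ perpBisector p₁ p₂ → y ∈ perpBisector p₁ p₂ →
      ⟪p₂ -ᵥ p₁, x -ᵥ y⟫ = 0 := fun hx hy =>
    Submodule.mem_orthogonal_singleton_iff_inner_right.1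
      (direction_perpBisector p₁ p₂ ▸ vsub_mem_direction hx hy)
  have hO := midpoint_mem_perpBisector p₁ p₂
  have parallel := sq_real_inner_eq_of_inner_eq_zero (vsub_ne_zero.2 h.symm) (orth hc₁ hO)
    (orth hc₁ hc₂)
  have polar : ‖c₂ -ᵥ O‖ ^ 2 =
      ‖c₁ -ᵥ O‖ ^ 2 - 2 * ⟪c₁ -ᵥ O, c₁ -ᵥ c₂⟫ + ‖c₁ -ᵥ c₂‖ ^ 2 := by
    rw [← norm_sub_sq_real, vsub_sub_vsub_cancel_left]
  rw [apollonius c₁ hc₁, apollonius c₂ hc₂, dist_eq_norm_vsub V c₁ c₂, polar]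
  linear_combination 4 * parallel

theorem eq_of_mem_perpBisector_of_dist_eq_intCast {p₁ p₂ c₁ c₂ : P} (h : dist p₁ p₂ = 1)
    (hc₁ : c₁ ∈ perpBisector p₁ p₂) (hc₂ : c₂ ∈ perpBisector p₁ p₂) {k m d : ℤ}
    (hk : dist c₁ p₁ = k) (hm : dist c₂ p₁ = m) (hd : dist c₁ c₂ = d) : c₁ = c₂ := by
  have key := sq_dist_sub_sq_dist_add_sq_dist_of_mem_perpBisector
    (dist_pos.1 (h ▸ one_pos)) hc₁ hc₂
  rw [hk, hm, hd, h] at key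
  have hd0 : d = 0 := eq_zero_of_four_mul_sq_sub_one_mul_sq_eq_sq (r := k ^ 2 - m ^ 2 + d ^ 2)
    (by exact_mod_cast key.symm)
  rw [← dist_eq_zero, hd, hd0, Int.cast_zero]

theorem HasIntegralDistances.eq_of_notMem_affineSpan_pair {S : Set P}
    (hS : HasIntegralDistances S) {q r p p' : P} (hq : q ∈ S) (hr : r ∈ S) (hqr : dist q r = 1)
    (hp : p ∈ S) (hp' : p' ∈ S) (hpL : p ∉ line[ℝ, q, r]) (hp'L : p' ∉ line[ℝ, q, r]) :
    p = p' := by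
  have bisector : ∀ {x}, x ∈ S → x ∉ line[ℝ, q, r] → x ∈ perpBisector q r := fun hx hxL =>
    mem_perpBisector_iff_dist_eq.2 (hS.dist_eq_dist_of_notMem_affineSpan_pair hx hq hr hqr hxL)
  obtain ⟨k, hk⟩ := hS p hp q hq
  obtain ⟨m, hm⟩ := hS p' hp' q hq
  obtain ⟨d, hd⟩ := hS p hp p' hp'
  exact eq_of_mem_perpBisector_of_dist_eq_intCast hqr (bisector hp hpL) (bisector hp' hp'L) hk hm hd

theorem HasIntegralDistances.dist_ne_one_of_notMem {S : Finset P}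
    (hS : HasIntegralDistances (S : Set P)) (hcard : 4 ≤ S.card) {L : AffineSubspace ℝ P}
    {A B : P} (hA : A ∈ S) (hAL : A ∉ L) (hL : ∀ p ∈ S, p ≠ A → p ∈ L) (hB : B ∈ S)
    (hBA : B ≠ A) : dist B A ≠ 1 := by
  classical
  intro hBA1
  have hcard' : 1 < ((S.erase A).erase B).card := by
    rw [Finset.card_erase_of_mem (Finset.mem_erase.2 ⟨hBA, hB⟩), Finset.card_erase_of_mem hA]
    omega
  obtain ⟨x, hx, y, hy, hxy⟩ := Finset.one_lt_card.1 hcard'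
  simp only [Finset.mem_erase] at hx hy
  have off : ∀ z ∈ S, z ≠ B → z ≠ A → z ∉ line[ℝ, B, A] := fun z hz hzB hzA =>
    notMem_affineSpan_pair_of_mem hAL (hL B hB hBA) (hL z hz hzA) hzB
  exact hxy (hS.eq_of_notMem_affineSpan_pair hB hA hBA1 hx.2.2 hy.2.2
    (off x hx.2.2 hx.1 hx.2.1) (off y hy.2.2 hy.1 hy.2.1))

end InnerProduct

/-- If M is a planar integral point set of n ≥ 4 points containing M₁, M₂ with
|M₁M₂| = 1, then the distance 1 occurs exactly once in M, all points of M except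
one lie on the line through M₁ and M₂, and the remaining point lies on the
perpendicular bisector of M₁M₂ (i.e. is equidistant from M₁ and M₂). -/
theorem structure_of_integral_point_set_with_unit_distance
    (M : Finset (EuclideanSpace ℝ (Fin 2))) (n : ℕ) (hn : 4 ≤ n) (hcard : M.card = n)
    (hnoncol : ¬ Collinear ℝ (M : Set (EuclideanSpace ℝ (Fin 2))))
    (hint : ∀ p ∈ M, ∀ q ∈ M, ∃ z : ℤ, dist p q = (z : ℝ))
    (M1 M2 : EuclideanSpace ℝ (Fin 2)) (hM1 : M1 ∈ M) (hM2 : M2 ∈ M)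
    (h12 : dist M1 M2 = 1) :
    (∀ p ∈ M, ∀ q ∈ M, dist p q = 1 →
      ({p, q} : Set (EuclideanSpace ℝ (Fin 2))) = {M1, M2}) ∧
    (∃ A ∈ M, A ∉ affineSpan ℝ ({M1, M2} : Set (EuclideanSpace ℝ (Fin 2))) ∧
      dist A M1 = dist A M2 ∧
      ∀ p ∈ M, p ≠ A → p ∈ affineSpan ℝ ({M1, M2} : Set (EuclideanSpace ℝ (Fin 2)))) := by
  have : Fact (finrank ℝ (EuclideanSpace ℝ (Fin 2)) = 2) := ⟨finrank_euclideanSpace_fin⟩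
  have hM : HasIntegralDistances (M : Set (EuclideanSpace ℝ (Fin 2))) := hint
  obtain ⟨A, hA, hAL⟩ : ∃ A ∈ M, A ∉ line[ℝ, M1, M2] := by
    by_contra! h
    exact hnoncol (collinear_of_subset_affineSpan_pair h)
  have hAM : dist A M1 = dist A M2 := hM.dist_eq_dist_of_notMem_affineSpan_pair hA hM1 hM2 h12 hAL
  have honL : ∀ p ∈ M, p ≠ A → p ∈ line[ℝ, M1, M2] := fun p hp hpA => by
    by_contra hpL
    exact hpA (hM.eq_of_notMem_affineSpan_pair hM1 hM2 h12 hp hA hpL hAL)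
  refine ⟨fun p hp q hq hpq => ?_, A, hA, hAL, hAM, honL⟩
  have hunit : ∀ B ∈ M, B ≠ A → dist B A ≠ 1 := fun B hB hBA =>
    hM.dist_ne_one_of_notMem (hcard ▸ hn) hA hAL honL hB hBA
  by_cases hpA : p = A
  · subst hpA
    by_cases hqp : q = p
    · simp [hqp] at hpq
    · exact absurd (dist_comm p q ▸ hpq) (hunit q hq hqp)
  by_cases hqA : q = A
  · exact absurd (hqA ▸ hpq) (hunit p hp hpA)
  have hpL := honL p hp hpA
  have hqL := honL q hq hqA
  have hApq : A ∉ line[ℝ, p, q] := fun h => hAL (affineSpan_pair_le_of_mem_of_mem hpL hqL h)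
  exact pair_eq_of_mem_perpBisector (dist_pos.1 (h12 ▸ one_pos)) hpL hqL (hpq.trans h12.symm)
    (mem_perpBisector_iff_dist_eq.2 hAM) (mem_perpBisector_iff_dist_eq.2
      (hM.dist_eq_dist_of_notMem_affineSpan_pair hA hp hq hpq hApq))
end

section
/- There exists a dense subset P of the unit circle in ℝ² such that for any two points P₁, P₂ ∈ P, the Euclidean distance |P₁P₂| is rational. -/
/-!
For points `z, w` of the unit circle in `ℂ` one has `|z² - w²| = 2 |Im (z w̄)|`, which is rational
when `z` and `w` have rational coordinates. Rational points are dense in the circle (tangent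
half-angle substitution), and squaring maps the circle continuously onto itself, so the squares of
rational points form a dense set with rational mutual distances. An isometry `ℂ ≃ ℝ²` carries it
over to the Euclidean plane.
-/

open Complex ComplexConjugate Metric Set

def HasDenseRationalDistanceSubset {α : Type*} [PseudoMetricSpace α] (S : Set α) : Prop :=
  ∃ P ⊆ S, S ⊆ closure P ∧ ∀ p ∈ P, ∀ q ∈ P, ∃ r : ℚ, dist p q = (r : ℝ)

theorem HasDenseRationalDistanceSubset.image {α β : Type*} [PseudoMetricSpace α]
    [PseudoMetricSpace β] {S : Set α} (h : HasDenseRationalDistanceSubset S) (e : α ≃ᵢ β) :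
    HasDenseRationalDistanceSubset (e '' S) := by
  obtain ⟨P, hPS, hSP, hrat⟩ := h
  refine ⟨e '' P, image_mono hPS, (image_mono hSP).trans
    (image_closure_subset_closure_image e.continuous), ?_⟩
  rintro _ ⟨p, hp, rfl⟩ _ ⟨q, hq, rfl⟩
  simpa only [e.dist_eq] using hrat p hp q hq

namespace Complex

def rationalCircle : Set ℂ :=
  {z | ‖z‖ = 1 ∧ (∃ a : ℚ, z.re = a) ∧ ∃ b : ℚ, z.im = b}

theorem norm_eq_one_iff_re_sq_add_im_sq (z : ℂ) : ‖z‖ = 1 ↔ z.re ^ 2 + z.im ^ 2 = 1 := by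
  rw [← sq_eq_sq₀ (norm_nonneg z) zero_le_one, Complex.sq_norm, normSq_apply, one_pow, sq, sq]

theorem neg_one_mem_rationalCircle : (-1 : ℂ) ∈ rationalCircle :=
  ⟨by simp, ⟨-1, by simp⟩, ⟨0, by simp⟩⟩

-- `(1 + t i) / (1 - t i)`: the tangent half-angle parametrisation of the unit circle minus `-1`.
noncomputable def cayley (t : ℝ) : ℂ :=
  ⟨(1 - t ^ 2) / (1 + t ^ 2), 2 * t / (1 + t ^ 2)⟩

theorem continuous_cayley : Continuous cayley := by
  have h : ∀ t : ℝ, 1 + t ^ 2 ≠ 0 := fun t => by positivity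
  exact equivRealProdCLM.symm.continuous.comp
    (((by fun_prop : Continuous fun t : ℝ => 1 - t ^ 2).div (by fun_prop) h).prodMk
      ((by fun_prop : Continuous fun t : ℝ => 2 * t).div (by fun_prop) h))

theorem cayley_ratCast_mem_rationalCircle (q : ℚ) : cayley q ∈ rationalCircle := by
  have hq : (1 : ℝ) + (q : ℝ) ^ 2 ≠ 0 := by positivity
  refine ⟨?_, ⟨(1 - q ^ 2) / (1 + q ^ 2), by simp [cayley]⟩, ⟨2 * q / (1 + q ^ 2), by simp [cayley]⟩⟩
  rw [norm_eq_one_iff_re_sq_add_im_sq]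
  simp only [cayley]
  field_simp
  ring

theorem range_cayley_subset_closure_rationalCircle : range cayley ⊆ closure rationalCircle :=
  (continuous_cayley.range_subset_closure_image_dense Rat.denseRange_cast).trans <|
    closure_mono <| by
      rintro _ ⟨_, ⟨q, rfl⟩, rfl⟩
      exact cayley_ratCast_mem_rationalCircle q

theorem cayley_im_div_one_add_re {z : ℂ} (hz : ‖z‖ = 1) (h : z.re ≠ -1) :
    cayley (z.im / (1 + z.re)) = z := by
  rw [norm_eq_one_iff_re_sq_add_im_sq] at hz
  have h1 : 1 + z.re ≠ 0 := fun H => h (by linarith)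
  apply Complex.ext <;> simp only [cayley] <;> field_simp
  · linear_combination (-1 - z.re) * hz
  · linear_combination (-z.im) * hz

theorem sphere_subset_closure_rationalCircle : sphere (0 : ℂ) 1 ⊆ closure rationalCircle := by
  intro z hz
  rw [mem_sphere_zero_iff_norm] at hz
  by_cases h : z.re = -1
  · have hz' : z = -1 := by
      rw [norm_eq_one_iff_re_sq_add_im_sq, h] at hz
      exact Complex.ext h (by simpa using pow_eq_zero_iff (n := 2) two_ne_zero |>.mp (by linarith))
    exact hz' ▸ subset_closure neg_one_mem_rationalCircle
  · exact range_cayley_subset_closure_rationalCircle ⟨_, cayley_im_div_one_add_re hz h⟩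

theorem norm_sq_sub_sq_of_norm_eq_one {z w : ℂ} (hz : ‖z‖ = 1) (hw : ‖w‖ = 1) :
    ‖z ^ 2 - w ^ 2‖ = 2 * |(z * conj w).im| := by
  rw [norm_eq_one_iff_re_sq_add_im_sq] at hz hw
  rw [← sq_eq_sq₀ (norm_nonneg _) (by positivity), Complex.sq_norm, normSq_apply, mul_pow, sq_abs]
  simp only [sub_re, sub_im, pow_two, mul_re, mul_im, conj_re, conj_im]
  linear_combination (z.re ^ 2 + z.im ^ 2 - w.re ^ 2 - w.im ^ 2) * (hz - hw)

theorem exists_pow_two_eq_of_norm_eq_one {z : ℂ} (hz : ‖z‖ = 1) : ∃ w : ℂ, ‖w‖ = 1 ∧ w ^ 2 = z := by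
  obtain ⟨w, rfl⟩ := IsAlgClosed.exists_pow_nat_eq z two_pos
  refine ⟨w, ?_, rfl⟩
  rw [norm_pow] at hz
  exact (pow_eq_one_iff_of_nonneg (norm_nonneg w) two_ne_zero).mp hz

theorem hasDenseRationalDistanceSubset_sphere :
    HasDenseRationalDistanceSubset (sphere (0 : ℂ) 1) := by
  refine ⟨(· ^ 2) '' rationalCircle, ?_, ?_, ?_⟩
  · rintro _ ⟨z, hz, rfl⟩
    simp [hz.1]
  · intro z hz
    obtain ⟨w, hw, rfl⟩ := exists_pow_two_eq_of_norm_eq_one (mem_sphere_zero_iff_norm.mp hz)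
    exact image_closure_subset_closure_image (continuous_pow 2)
      ⟨w, sphere_subset_closure_rationalCircle (mem_sphere_zero_iff_norm.mpr hw), rfl⟩
  · rintro _ ⟨z, ⟨hz, ⟨a, ha⟩, b, hb⟩, rfl⟩ _ ⟨w, ⟨hw, ⟨c, hc⟩, d, hd⟩, rfl⟩
    refine ⟨2 * |b * c - a * d|, ?_⟩
    rw [dist_eq_norm, norm_sq_sub_sq_of_norm_eq_one hz hw]
    simp [ha, hb, hc, hd, neg_add_eq_sub]

end Complex

/-- There is a dense subset of the unit circle all of whose pairwise distances
are rational. -/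
theorem exists_dense_rational_distance_subset_of_circle :
    ∃ P : Set (EuclideanSpace ℝ (Fin 2)),
      P ⊆ Metric.sphere (0 : EuclideanSpace ℝ (Fin 2)) 1 ∧
      Metric.sphere (0 : EuclideanSpace ℝ (Fin 2)) 1 ⊆ closure P ∧
      ∀ p ∈ P, ∀ q ∈ P, ∃ r : ℚ, dist p q = (r : ℝ) := by
  have h := hasDenseRationalDistanceSubset_sphere.image
    orthonormalBasisOneI.repr.toIsometryEquiv
  rwa [IsometryEquiv.image_sphere, LinearIsometryEquiv.coe_toIsometryEquiv, map_zero] at h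
end
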